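/- arXiv:2504.03307 — 8 statements merged into one kernel-verified Lean document; each statement's English description precedes it below -/
import Mathlib

section
/- Let q be a prime power and let n, u be positive integers with gcd(n,u) = 1. Let a_1, ..., a_t be elements of F_{q^n} with t ≤ n, viewed as elements of F_{q^{nu}}. Then a_1, ..., a_t are linearly independent over F_q if and only if they are linearly independent over F_{q^u}. -/
/-- Let `F` be a finite field with `q` elements, `L = F_{q^{nu}}` an extension of `F`
of degree `n * u` with `gcd(n, u) = 1`, and let `Kn = F_{q^n}` and `Ku = F_{q^u}` be the
intermediate fields of degrees `n` and `u` over `F`. Let `a_1, ..., a_t ∈ Kn ⊆ L` with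
`t ≤ n`. Then the `a_i` are linearly independent over `F` if and only if they are
linearly independent over `Ku`. -/
theorem stmt1 (F L : Type*) [Field F] [Fintype F] [Field L] [Algebra F L]
    (n u t : ℕ) (hcop : Nat.Coprime n u) (hL : Module.finrank F L = n * u)
    (Kn Ku : IntermediateField F L)
    (hKn : Module.finrank F Kn = n) (hKu : Module.finrank F Ku = u)
    (ht : t ≤ n) (a : Fin t → L) (ha : ∀ i, a i ∈ Kn) :
    LinearIndependent F a ↔ LinearIndependent Ku a := by
  constructor
  · intro h
    have H : Ku.LinearDisjoint Kn := by
      apply IntermediateField.LinearDisjoint.of_finrank_coprime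
      rw [hKu, hKn]
      exact hcop.symm
    set a' : Fin t → Kn := fun i => ⟨a i, ha i⟩ with ha'
    have h1 : LinearIndependent F a' := by
      have : a = ⇑Kn.val.toLinearMap ∘ a' := by ext i; rfl
      rw [this] at h
      exact h.of_comp Kn.val.toLinearMap
    have h2 := H.linearIndependent_right' h1
    have : (algebraMap Kn L) ∘ a' = a := by
      ext i; rfl
    rwa [this] at h2
  · intro h
    exact h.restrict_scalars (by
      intro x y hxy
      have := congrArg Subtype.val hxy
      simpa [Algebra.smul_def, mul_comm] using this)
end

section
/- Let q be a prime power, n and u positive integers with gcd(n,u) = 1, and let a_1, ..., a_k ∈ F_{q^n} ⊆ F_{q^{nu}} with k ≤ n. Then the determinant of the k×k matrix with (i,j) entry a_j^{q^{u(i-1)}} is nonzero if and only if a_1, ..., a_k are linearly independent over F_q. -/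
set_option synthInstance.maxHeartbeats 1000000
set_option maxHeartbeats 1000000
set_option linter.unusedVariables false

private lemma pow_iter_fix {K : Type*} [Monoid K] (x : K) (q m : ℕ) (h : x ^ q ^ m = x) :
    ∀ t, x ^ q ^ (m * t) = x := by
  intro t
  induction t with
  | zero => simp
  | succ t ih =>
    have : q ^ (m * (t+1)) = q ^ (m*t) * q ^ m := by ring
    rw [this, pow_mul, ih, h]


/-- Fixed points of `x ↦ x^(q^u)` on a field with `q^n` elements, `gcd(n,u)=1`,
are in the image of `F`. -/
private lemma fix_mem_range (F K : Type*) [Field F] [Fintype F] [Field K] [Fintype K]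
    [Algebra F K] (n u : ℕ) (hcop : Nat.Coprime n u)
    (hcard : Fintype.card K = Fintype.card F ^ n)
    (x : K) (hx : x ^ (Fintype.card F) ^ u = x) : ∃ g : F, algebraMap F K g = x := by
  set q := Fintype.card F with hq
  have hq2 : 1 < q := Fintype.one_lt_card
  have hn : x ^ q ^ n = x := by rw [← hcard]; exact FiniteField.pow_card x
  -- step 1 : x ^ q = x
  have hfix : x ^ q = x := by
    rcases Nat.eq_zero_or_pos n with h0 | hpos
    · have hu1 : u = 1 := by simpa [h0, Nat.coprime_zero_left] using hcop
      simpa [hu1] using hx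
    rcases eq_or_lt_of_le (show 1 ≤ n from hpos) with h1 | h2
    · simpa [← h1] using hn
    · obtain ⟨c, -, hc⟩ := Nat.exists_mul_mod_eq_one_of_coprime hcop.symm h2
      have hdm : n * (u * c / n) + 1 = u * c := by
        conv_rhs => rw [← Nat.div_add_mod (u*c) n]
        rw [hc]
      have h3 : x ^ q ^ (u * c) = x := pow_iter_fix x q u hx c
      rw [← hdm, pow_add, pow_mul, pow_iter_fix x q n hn _, pow_one] at h3
      exact h3
  -- step 2 : roots counting
  classical
  have hinj : Function.Injective (algebraMap F K) := (algebraMap F K).injective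
  set T : Finset K := Finset.univ.image (algebraMap F K) with hT
  have hTcard : T.card = q := by
    rw [hT, Finset.card_image_of_injective _ hinj, Finset.card_univ]
  set P : Polynomial K := Polynomial.X ^ q - Polynomial.X with hP
  have hPdeg : P.natDegree = q := by
    rw [hP]
    rw [Polynomial.natDegree_sub_eq_left_of_natDegree_lt] <;>
      simp [Polynomial.natDegree_X_pow, hq2]
  have hP0 : P ≠ 0 := fun h => by simp [h] at hPdeg; omega
  have hroot : ∀ y : K, y ^ q = y → y ∈ P.roots.toFinset := by
    intro y hy
    rw [Multiset.mem_toFinset, Polynomial.mem_roots hP0]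
    simp [Polynomial.IsRoot, hP, hy]
  have hsub : T ⊆ P.roots.toFinset := by
    intro y hy
    rw [hT, Finset.mem_image] at hy
    obtain ⟨g, -, rfl⟩ := hy
    apply hroot
    rw [← map_pow, FiniteField.pow_card]
  have hle : P.roots.toFinset.card ≤ q := by
    calc P.roots.toFinset.card ≤ Multiset.card P.roots := Multiset.toFinset_card_le _
    _ ≤ P.natDegree := P.card_roots'
    _ = q := hPdeg
  have heq : T = P.roots.toFinset :=
    Finset.eq_of_subset_of_card_le hsub (by rw [hTcard]; exact hle)
  have : x ∈ T := by rw [heq]; exact hroot x hfix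
  rw [hT, Finset.mem_image] at this
  obtain ⟨g, -, hg⟩ := this
  exact ⟨g, hg⟩

private lemma moore_det_ne_zero (F K : Type*) [Field F] [Fintype F] [Field K] [Fintype K]
    [Algebra F K] (n u : ℕ) (hcop : Nat.Coprime n u)
    (hcard : Fintype.card K = Fintype.card F ^ n) (k : ℕ) :
    ∀ (b : Fin k → K), LinearIndependent F b →
      (Matrix.of fun i j : Fin k => b j ^ (Fintype.card F) ^ (u * (i : ℕ))).det ≠ 0 := by
  classical
  set q := Fintype.card F with hqdef
  -- characteristic setup
  have hpK : CharP K (ringChar F) := charP_of_injective_algebraMap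
    (algebraMap F K).injective (ringChar F)
  set p := ringChar F with hpdef
  have hpprime : p.Prime := CharP.char_is_prime F p
  haveI : ExpChar K p := ExpChar.prime hpprime
  obtain ⟨s, -, hqs⟩ := FiniteField.card F p
  set σ : K →+* K := iterateFrobenius K p (s * u) with hσdef
  have hσ : ∀ x : K, σ x = x ^ q ^ u := by
    intro x
    rw [hσdef, iterateFrobenius_def, pow_mul, ← hqs]
  have hσinj : Function.Injective σ := σ.injective
  induction k with
  | zero => intro b hb; simp [Matrix.det_isEmpty]
  | succ k IH =>
    intro b hb hdet
    obtain ⟨v, hv0, hvM⟩ := Matrix.exists_mulVec_eq_zero_iff.mpr hdet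
    set b' : Fin k → K := fun j => b j.castSucc with hb'def
    have hb' : LinearIndependent F b' := hb.comp Fin.castSucc (Fin.castSucc_injective k)
    have hM' : (Matrix.of fun i j : Fin k => b' j ^ q ^ (u * (i : ℕ))).det ≠ 0 := IH b' hb'
    have hrow : ∀ i : Fin (k+1), ∑ j, b j ^ q ^ (u * (i : ℕ)) * v j = 0 := by
      intro i
      have := congrFun hvM i
      simpa [Matrix.mulVec, dotProduct] using this
    -- v (last) ≠ 0
    have hvlast : v (Fin.last k) ≠ 0 := by
      intro h0
      have hv'0 : (fun j : Fin k => v j.castSucc) ≠ 0 := by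
        obtain ⟨j, hj⟩ := Function.ne_iff.mp hv0
        rcases Fin.eq_castSucc_or_eq_last j with ⟨j', rfl⟩ | rfl
        · exact Function.ne_iff.mpr ⟨j', hj⟩
        · exact absurd h0 hj
      refine hM' (Matrix.exists_mulVec_eq_zero_iff.mp ⟨_, hv'0, ?_⟩)
      funext i
      have h1 := hrow i.castSucc
      rw [Fin.sum_univ_castSucc] at h1
      simp only [h0, mul_zero, add_zero, Fin.coe_castSucc] at h1
      simpa [Matrix.mulVec, dotProduct] using h1
    -- normalize
    set c : Fin (k+1) → K := fun j => (v (Fin.last k))⁻¹ * v j with hcdef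
    have hcn : ∀ m : ℕ, (hm : m < k + 1) → ∑ j, b j ^ q ^ (u * m) * c j = 0 := by
      intro m hm
      have h1 := hrow ⟨m, hm⟩
      have : ∑ j, b j ^ q ^ (u * m) * c j
          = (v (Fin.last k))⁻¹ * ∑ j, b j ^ q ^ (u * m) * v j := by
        rw [Finset.mul_sum]
        exact Finset.sum_congr rfl fun j _ => by rw [hcdef]; ring
      rw [this, h1, mul_zero]
    have hclast : c (Fin.last k) = 1 := inv_mul_cancel₀ hvlast
    -- apply σ
    have hS2 : ∀ m : ℕ, m < k + 1 → ∑ j, b j ^ q ^ (u * (m+1)) * σ (c j) = 0 := by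
      intro m hm
      have h1 := congrArg σ (hcn m hm)
      rw [map_sum, map_zero] at h1
      rw [← h1]
      refine Finset.sum_congr rfl fun j _ => ?_
      have he : q ^ u * q ^ (u*m) = q ^ (u*(m+1)) := by rw [← pow_add]; ring_nf
      have : σ (b j ^ q ^ (u * m) * c j) = b j ^ q ^ (u * (m+1)) * σ (c j) := by
        rw [map_mul, map_pow, hσ (b j), ← pow_mul, he]
      exact this.symm
    set w : Fin (k+1) → K := fun j => c j - σ (c j) with hwdef
    have hw : ∀ m : ℕ, m < k → ∑ j, b j ^ q ^ (u * (m+1)) * w j = 0 := by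
      intro m hm
      have A := hcn (m+1) (by omega)
      have B := hS2 m (by omega)
      have : ∑ j, b j ^ q ^ (u * (m+1)) * w j
          = (∑ j, b j ^ q ^ (u * (m+1)) * c j) - ∑ j, b j ^ q ^ (u * (m+1)) * σ (c j) := by
        rw [← Finset.sum_sub_distrib]
        exact Finset.sum_congr rfl fun j _ => by rw [hwdef]; ring
      rw [this, A, B, sub_zero]
    have hwlast : w (Fin.last k) = 0 := by
      rw [hwdef]; simp only [hclast, map_one, sub_self]
    -- the shifted matrix
    have hNdet : ((Matrix.of fun i j : Fin k => b' j ^ q ^ (u * (i : ℕ))).map σ).det ≠ 0 := by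
      intro h
      rw [← RingHom.mapMatrix_apply, ← RingHom.map_det] at h
      exact hM' (hσinj (by rw [h, map_zero]))
    have hwc : (fun j : Fin k => w j.castSucc) = 0 := by
      by_contra hne
      refine hNdet (Matrix.exists_mulVec_eq_zero_iff.mp ⟨_, hne, ?_⟩)
      funext i
      have h1 := hw i (i.isLt)
      rw [Fin.sum_univ_castSucc, hwlast, mul_zero, add_zero] at h1
      have hentry : ∀ j : Fin k, σ (b' j ^ q ^ (u * (i : ℕ)))
          = b j.castSucc ^ q ^ (u * ((i : ℕ) + 1)) := by
        intro j
        have he : q ^ u * q ^ (u*(i : ℕ)) = q ^ (u*((i : ℕ)+1)) := by rw [← pow_add]; ring_nf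
        rw [map_pow, hσ (b' j), ← pow_mul, he, hb'def]
      simp only [Matrix.mulVec, dotProduct, Matrix.map_apply, Matrix.of_apply,
        Pi.zero_apply]
      rw [← h1]
      exact Finset.sum_congr rfl fun j _ => by rw [hentry j]
    have hwall : ∀ j : Fin (k+1), c j ^ q ^ u = c j := by
      intro j
      have : w j = 0 := by
        rcases Fin.eq_castSucc_or_eq_last j with ⟨j', rfl⟩ | rfl
        · exact congrFun hwc j'
        · exact hwlast
      rw [hwdef] at this
      have := sub_eq_zero.mp this
      rw [← hσ]; exact this.symm
    -- coefficients in F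
    have hg : ∀ j : Fin (k+1), ∃ g : F, algebraMap F K g = c j := fun j =>
      fix_mem_range F K n u hcop hcard (c j) (hwall j)
    choose g hgc using hg
    have hsum : ∑ j, g j • b j = 0 := by
      have h0 := hcn 0 (by omega)
      simp only [Nat.mul_zero, pow_zero, pow_one] at h0
      rw [← h0]
      exact Finset.sum_congr rfl fun j _ => by rw [Algebra.smul_def, hgc, mul_comm]
    have hg0 : ∀ j, g j = 0 := Fintype.linearIndependent_iff.mp hb g hsum
    have : (1 : K) = 0 := by
      rw [← hclast, ← hgc, hg0, map_zero]
    exact one_ne_zero this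

/-- Decimated Moore determinant: let `F` be a finite field with `q` elements,
`L = F_{q^{nu}}` an extension of degree `n * u` with `gcd(n, u) = 1`, and
`Kn = F_{q^n}` the intermediate field of degree `n` over `F`. Let
`a_1, ..., a_k ∈ Kn ⊆ L` with `k ≤ n`. Then the determinant (computed in `L`) of the
`k × k` matrix with `(i,j)` entry `a_j ^ (q ^ (u * i))` (rows `i = 0, ..., k-1`) is
nonzero if and only if `a_1, ..., a_k` are linearly independent over `F`. -/
theorem stmt3 (F L : Type*) [Field F] [Fintype F] [Field L] [Algebra F L]
    (n u k : ℕ) (hcop : Nat.Coprime n u) (hL : Module.finrank F L = n * u)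
    (Kn : IntermediateField F L) (hKn : Module.finrank F Kn = n)
    (hk : k ≤ n) (a : Fin k → L) (ha : ∀ i, a i ∈ Kn) :
    (Matrix.of fun i j : Fin k => a j ^ (Fintype.card F) ^ (u * (i : ℕ))).det ≠ 0
      ↔ LinearIndependent F a := by
  classical
  set q := Fintype.card F with hqdef
  rcases Nat.eq_zero_or_pos n with hn0 | hnpos
  · have hk0 : k = 0 := by omega
    subst hk0
    constructor
    · intro _; exact linearIndependent_empty_type
    · intro _; simp [Matrix.det_isEmpty]
  · haveI : FiniteDimensional F Kn := FiniteDimensional.of_finrank_pos (hKn ▸ hnpos)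
    haveI : Finite Kn := Module.finite_of_finite F
    haveI : Fintype Kn := Fintype.ofFinite Kn
    have hcardKn : Fintype.card Kn = q ^ n := by
      rw [Module.card_eq_pow_finrank (K := F) (V := Kn), hKn]
    set b : Fin k → Kn := fun j => ⟨a j, ha j⟩ with hbdef
    have hab : ∀ j, algebraMap Kn L (b j) = a j := fun j => rfl
    have hindep : LinearIndependent F a ↔ LinearIndependent F b := by
      have : a = (Kn.val.toLinearMap) ∘ b := by funext j; rfl
      rw [this]
      exact LinearMap.linearIndependent_iff _ (LinearMap.ker_eq_bot.mpr Subtype.val_injective)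
    have hdet : (Matrix.of fun i j : Fin k => a j ^ q ^ (u * (i : ℕ))).det
        = algebraMap Kn L (Matrix.of fun i j : Fin k => b j ^ q ^ (u * (i : ℕ))).det := by
      have hMeq : (Matrix.of fun i j : Fin k => a j ^ q ^ (u * (i : ℕ)))
          = (algebraMap Kn L).mapMatrix (Matrix.of fun i j : Fin k => b j ^ q ^ (u * (i : ℕ))) := by
        funext i j
        simp only [RingHom.mapMatrix_apply, Matrix.map_apply, Matrix.of_apply, map_pow, hab]
      rw [hMeq, ← RingHom.map_det]
    rw [hdet, hindep]
    constructor
    · -- det ≠ 0 → independent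
      intro hne
      have hdetKn : (Matrix.of fun i j : Fin k => b j ^ q ^ (u * (i : ℕ))).det ≠ 0 := by
        intro h; rw [h, map_zero] at hne; exact hne rfl
      by_contra hnot
      obtain ⟨g, hgsum, i0, hgi0⟩ := Fintype.not_linearIndependent_iff.mp hnot
      -- characteristic setup on Kn
      have hpK : CharP Kn (ringChar F) := charP_of_injective_algebraMap
        (algebraMap F Kn).injective (ringChar F)
      set p := ringChar F with hpdef
      have hpprime : p.Prime := CharP.char_is_prime F p
      haveI : ExpChar Kn p := ExpChar.prime hpprime
      obtain ⟨s, -, hqs⟩ := FiniteField.card F p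
      have hmul : (Matrix.of fun i j : Fin k => b j ^ q ^ (u * (i : ℕ))).mulVec
          (fun j => algebraMap F Kn (g j)) = 0 := by
        funext i
        set φ : Kn →+* Kn := iterateFrobenius Kn p (s * (u * (i : ℕ))) with hφdef
        have hφ : ∀ x : Kn, φ x = x ^ q ^ (u * (i : ℕ)) := by
          intro x
          rw [hφdef, iterateFrobenius_def, pow_mul, ← hqs]
        have h1 := congrArg φ hgsum
        rw [map_sum, map_zero] at h1
        simp only [Matrix.mulVec, dotProduct, Matrix.of_apply, Pi.zero_apply]
        rw [← h1]
        refine Finset.sum_congr rfl fun j _ => ?_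
        rw [Algebra.smul_def, map_mul, hφ, hφ, ← map_pow, FiniteField.pow_card_pow, mul_comm]
      have hvne : (fun j => algebraMap F Kn (g j)) ≠ 0 := by
        intro h
        apply hgi0
        have h2 := congrFun h i0
        simp only [Pi.zero_apply] at h2
        exact (algebraMap F Kn).injective (by rw [h2, map_zero])
      exact hdetKn (Matrix.exists_mulVec_eq_zero_iff.mp ⟨_, hvne, hmul⟩)
    · -- independent → det ≠ 0
      intro hind
      have := moore_det_ne_zero F Kn n u hcop hcardKn k b hind
      intro h
      exact this ((algebraMap Kn L).injective (by rw [h, map_zero]))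
end

section
/- A quadratic function F: F_2^n → F_2^n (deg(F) = 2) has the property that its restriction to every affine subspace of dimension 2 has degree exactly 2 if and only if F is APN (almost perfect nonlinear). -/
open Classical

/-- The `k`-fold "cube sum" of `f` at base point `a` with directions `v`:
`∑_{S ⊆ {1..k}} f(a + ∑_{i∈S} v i)`. -/
noncomputable def cubeSum {V W : Type*} [AddCommGroup V] [AddCommGroup W]
    (f : V → W) (k : ℕ) (a : V) (v : Fin k → V) : W :=
  ∑ S : Finset (Fin k), f (a + ∑ i ∈ S, v i)

/-- The algebraic degree of a function between elementary abelian 2-groups: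
the largest `k` such that some `k`-fold cube sum of `f` is nonzero
(equivalently, the degree of the algebraic normal form), with the
convention that the zero function has degree `⊥` (i.e. `-∞`). -/
noncomputable def adeg {V W : Type*} [AddCommGroup V] [AddCommGroup W] (f : V → W) : WithBot ℕ :=
  if h : ∃ k : ℕ, ∃ a v, cubeSum f k a v ≠ 0 then
    ((sSup {k : ℕ | ∃ a v, cubeSum f k a v ≠ 0} : ℕ) : WithBot ℕ)
  else ⊥

/-- `φ` is an affine map over `F₂` (between elementary abelian 2-groups). -/
def IsAffineF2 {V W : Type*} [AddCommGroup V] [AddCommGroup W] (φ : V → W) : Prop :=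
  ∀ x y, φ (x + y) = φ x + φ y + φ 0

/-- `φ` is a linear (i.e. additive) map over `F₂`. -/
def IsLinearF2 {V W : Type*} [AddCommGroup V] [AddCommGroup W] (φ : V → W) : Prop :=
  ∀ x y, φ (x + y) = φ x + φ y

/-- Hamming weight of the binary representation of a natural number. -/
def hw (d : ℕ) : ℕ := (Nat.digits 2 d).sum


set_option maxHeartbeats 1000000

section helpers
variable {m n p k : ℕ}

private lemma c2 (x : Fin m → ZMod 2) : x + x = 0 := by
  funext i
  have : ∀ c : ZMod 2, c + c = 0 := by decide
  exact this (x i)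

private lemma c2' (x y : Fin m → ZMod 2) : x + (x + y) = y := by
  rw [← add_assoc, c2, zero_add]

private lemma eq_iff_add (x y : Fin m → ZMod 2) : x = y ↔ x + y = 0 := by
  constructor
  · rintro rfl; exact c2 x
  · intro h
    have : x + y + y = 0 + y := by rw [h]
    simpa [add_assoc, c2] using this

private lemma cs2_expand (f : (Fin m → ZMod 2) → (Fin n → ZMod 2)) (a : Fin m → ZMod 2)
    (v : Fin 2 → Fin m → ZMod 2) :
    cubeSum f 2 a v = f a + f (a + v 0) + f (a + v 1) + f (a + (v 0 + v 1)) := by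
  have hu : (Finset.univ : Finset (Finset (Fin 2))) = {∅, {0}, {1}, {0, 1}} := by decide
  rw [cubeSum, hu]
  simp (config := { decide := true }) [Finset.sum_insert, add_assoc]

private lemma cs3_expand (f : (Fin m → ZMod 2) → (Fin n → ZMod 2)) (a : Fin m → ZMod 2)
    (v : Fin 3 → Fin m → ZMod 2) :
    cubeSum f 3 a v = f a + f (a + v 0) + f (a + v 1) + f (a + v 2)
      + f (a + (v 0 + v 1)) + f (a + (v 0 + v 2)) + f (a + (v 1 + v 2))
      + f (a + (v 0 + v 1 + v 2)) := by
  have hu : (Finset.univ : Finset (Finset (Fin 3))) =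
      {∅, {0}, {1}, {2}, {0, 1}, {0, 2}, {1, 2}, {0, 1, 2}} := by decide
  rw [cubeSum, hu]
  simp (config := { decide := true }) [Finset.sum_insert, add_assoc]

private lemma cs_dep (f : (Fin m → ZMod 2) → (Fin n → ZMod 2)) (a : Fin m → ZMod 2)
    (v : Fin k → Fin m → ZMod 2) (T : Finset (Fin k)) (hT : T.Nonempty)
    (h0 : ∑ i ∈ T, v i = 0) : cubeSum f k a v = 0 := by
  rw [cubeSum]
  apply Finset.sum_ninvolution (fun S => symmDiff S T)
  · intro S
    have hpt : ∑ i ∈ symmDiff S T, v i = ∑ i ∈ S, v i := by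
      have h1 : ∑ i ∈ symmDiff S T, v i + ∑ i ∈ S ∩ T, v i = ∑ i ∈ S ∪ T, v i := by
        rw [← Finset.sum_union]
        · congr 1
          simpa using symmDiff_sup_inf S T
        · exact disjoint_symmDiff_inf S T
      have h2 : ∑ i ∈ S ∪ T, v i + ∑ i ∈ S ∩ T, v i = ∑ i ∈ S, v i + ∑ i ∈ T, v i :=
        Finset.sum_union_inter
      have h3 : ∑ i ∈ symmDiff S T, v i + (∑ i ∈ S ∩ T, v i + ∑ i ∈ S ∩ T, v i)
          = ∑ i ∈ S, v i + ∑ i ∈ T, v i := by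
        rw [← add_assoc, h1, h2]
      rw [c2, add_zero] at h3
      rw [h3, h0, add_zero]
    rw [hpt]
    exact c2 _
  · intro S hS hc
    rw [symmDiff_eq_left] at hc
    rw [hc] at hT
    simp [Finset.not_nonempty_empty] at hT
  · intro S; exact Finset.mem_univ _
  · intro S; exact symmDiff_symmDiff_cancel_right T S

private lemma zmod2_ne_zero : ∀ c : ZMod 2, c ≠ 0 → c = 1 := by decide

private lemma zmod2_cases : ∀ c : ZMod 2, c = 0 ∨ c = 1 := by decide

private lemma dep_exists (h : m < k) (v : Fin k → Fin m → ZMod 2) :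
    ∃ T : Finset (Fin k), T.Nonempty ∧ ∑ i ∈ T, v i = 0 := by
  have : Fact (Nat.Prime 2) := ⟨by norm_num⟩
  have hli : ¬ LinearIndependent (ZMod 2) v := by
    intro hli
    have := hli.fintype_card_le_finrank
    simp [Module.finrank_pi] at this
    omega
  rw [Fintype.not_linearIndependent_iff] at hli
  obtain ⟨g, hg, i, hi⟩ := hli
  refine ⟨Finset.univ.filter (fun j => g j ≠ 0), ⟨i, by simp [hi]⟩, ?_⟩
  calc ∑ j ∈ Finset.univ.filter (fun j => g j ≠ 0), v j
      = ∑ j ∈ Finset.univ.filter (fun j => g j ≠ 0), g j • v j := by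
        apply Finset.sum_congr rfl
        intro j hj
        rw [zmod2_ne_zero (g j) (by simpa using (Finset.mem_filter.mp hj).2), one_smul]
    _ = ∑ j, g j • v j := by
        apply Finset.sum_filter_of_ne
        intro j _ hj hc
        exact hj (by rw [hc, zero_smul])
    _ = 0 := hg

private lemma cs_dim (f : (Fin m → ZMod 2) → (Fin n → ZMod 2)) (a : Fin m → ZMod 2)
    (v : Fin k → Fin m → ZMod 2) (h : m < k) : cubeSum f k a v = 0 := by
  obtain ⟨T, hT, h0⟩ := dep_exists h v
  exact cs_dep f a v T hT h0

variable {f : (Fin m → ZMod 2) → (Fin n → ZMod 2)}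

private lemma adeg_high_zero (hf : adeg f = ((2 : ℕ) : WithBot ℕ)) :
    ∀ k, 2 < k → ∀ a v, cubeSum f k a v = 0 := by
  intro k hk a v
  by_contra hne
  rw [adeg, dif_pos ⟨k, a, v, hne⟩] at hf
  have hs : sSup {k : ℕ | ∃ a v, cubeSum f k a v ≠ 0} = 2 := by exact_mod_cast hf
  have hbdd : BddAbove {k : ℕ | ∃ a v, cubeSum f k a v ≠ 0} := by
    refine ⟨m, fun j hj => ?_⟩
    by_contra hj'
    obtain ⟨a', v', hv⟩ := hj
    exact hv (cs_dim f a' v' (by omega))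
  have := le_csSup hbdd (Set.mem_setOf_eq ▸ ⟨a, v, hne⟩ : k ∈ _)
  rw [hs] at this
  omega

private lemma adeg_two_exists (hf : adeg f = ((2 : ℕ) : WithBot ℕ)) :
    ∃ a v, cubeSum f 2 a v ≠ 0 := by
  have hb := adeg_high_zero hf
  rw [adeg] at hf
  by_cases h : ∃ k : ℕ, ∃ a v, cubeSum f k a v ≠ 0
  · rw [dif_pos h] at hf
    have hs : sSup {k : ℕ | ∃ a v, cubeSum f k a v ≠ 0} = 2 := by exact_mod_cast hf
    have hbdd : BddAbove {k : ℕ | ∃ a v, cubeSum f k a v ≠ 0} := by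
      refine ⟨2, fun j hj => ?_⟩
      by_contra hj'
      obtain ⟨a', v', hv⟩ := hj
      exact hv (hb j (by omega) a' v')
    obtain ⟨k, hk⟩ := h
    have := Nat.sSup_mem ⟨k, hk⟩ hbdd
    rw [hs] at this
    exact this
  · rw [dif_neg h] at hf
    simp at hf

private lemma adeg_eq_two_of (h2 : ∃ a v, cubeSum f 2 a v ≠ 0)
    (hb : ∀ k, 2 < k → ∀ a v, cubeSum f k a v = 0) : adeg f = ((2 : ℕ) : WithBot ℕ) := by
  rw [adeg, dif_pos ⟨2, h2⟩]
  have : sSup {k : ℕ | ∃ a v, cubeSum f k a v ≠ 0} = 2 := by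
    apply IsGreatest.csSup_eq
    constructor
    · exact h2
    · intro j hj
      by_contra hj'
      obtain ⟨a', v', hv⟩ := hj
      exact hv (hb j (by omega) a' v')
  rw [this]

private lemma ext2 (s t : Fin 2 → ZMod 2) (h0 : s 0 = t 0) (h1 : s 1 = t 1) : s = t := by
  funext i
  fin_cases i <;> assumption

end helpers

/-- A quadratic function `F : F_2^n → F_2^n` (i.e. `deg F = 2`) has the property that
its restriction to every 2-dimensional affine subspace (given via an injective affine
parametrization `φ : F_2^2 → F_2^n`) has degree exactly 2, if and only if `F` is APN,
i.e. for every nonzero `a` the derivative `x ↦ F(x+a) + F(x)` is 2-to-1 (every value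
has at most 2 preimages). -/
theorem stmt7 {n : ℕ} (F : (Fin n → ZMod 2) → (Fin n → ZMod 2))
    (hF : adeg F = ((2 : ℕ) : WithBot ℕ)) :
    (∀ φ : (Fin 2 → ZMod 2) → (Fin n → ZMod 2), IsAffineF2 φ → Function.Injective φ →
        adeg (F ∘ φ) = ((2 : ℕ) : WithBot ℕ))
      ↔ (∀ a : Fin n → ZMod 2, a ≠ 0 → ∀ b : Fin n → ZMod 2,
          Set.ncard {x : Fin n → ZMod 2 | F (x + a) + F x = b} ≤ 2) := by
  have h3 : ∀ (a : Fin n → ZMod 2) (v : Fin 3 → Fin n → ZMod 2), cubeSum F 3 a v = 0 :=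
    fun a v => adeg_high_zero hF 3 (by omega) a v
  -- base point independence of the 2-fold cube sum
  have baseInd : ∀ p q A B : Fin n → ZMod 2,
      cubeSum F 2 p ![A, B] = cubeSum F 2 q ![A, B] := by
    intro p q A B
    have h := h3 p ![A, B, p + q]
    rw [cs3_expand] at h
    simp only [Matrix.cons_val_zero, Matrix.cons_val_one, Matrix.head_cons] at h
    have h2 : (![A, B, p + q] : Fin 3 → Fin n → ZMod 2) 2 = p + q := rfl
    rw [h2] at h
    rw [cs2_expand, cs2_expand]
    simp only [Matrix.cons_val_zero, Matrix.cons_val_one, Matrix.head_cons]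
    rw [eq_iff_add, ← h]
    simp [c2, c2', add_assoc, add_comm, add_left_comm]
  have key2 : ∀ (p A B : Fin n → ZMod 2),
      cubeSum F 2 p ![A, B] = F p + F (p + A) + F (p + B) + F (p + (A + B)) := by
    intro p A B
    rw [cs2_expand]
    simp only [Matrix.cons_val_zero, Matrix.cons_val_one, Matrix.head_cons]
  have Bzero_left : ∀ p B : Fin n → ZMod 2, cubeSum F 2 p ![0, B] = 0 := by
    intro p B
    rw [key2]
    simp [c2, c2', add_assoc, add_comm, add_left_comm]
  have Bzero_right : ∀ p A : Fin n → ZMod 2, cubeSum F 2 p ![A, 0] = 0 := by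
    intro p A
    rw [key2]
    simp [c2, c2', add_assoc, add_comm, add_left_comm]
  have Bdiag : ∀ p A : Fin n → ZMod 2, cubeSum F 2 p ![A, A] = 0 := by
    intro p A
    rw [key2]
    simp [c2, c2', add_assoc, add_comm, add_left_comm]
  have Bsymm : ∀ p A B : Fin n → ZMod 2, cubeSum F 2 p ![A, B] = cubeSum F 2 p ![B, A] := by
    intro p A B
    rw [key2, key2, eq_iff_add]
    simp [c2, c2', add_assoc, add_comm, add_left_comm]
  have Badd : ∀ p A B C : Fin n → ZMod 2,
      cubeSum F 2 p ![A, B + C] = cubeSum F 2 p ![A, B] + cubeSum F 2 p ![A, C] := by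
    intro p A B C
    rw [baseInd p (p + B) A C, key2, key2, key2, eq_iff_add]
    simp [c2, c2', add_assoc, add_comm, add_left_comm]
  constructor
  · -- restrictions have degree 2 → APN
    intro hyp a ha b
    rcases Set.eq_empty_or_nonempty {x : Fin n → ZMod 2 | F (x + a) + F x = b} with hS | ⟨x, hx⟩
    · rw [hS]; simp
    · have hsub : {x' : Fin n → ZMod 2 | F (x' + a) + F x' = b} ⊆ {x, x + a} := by
        intro y hy
        by_contra hy'
        simp only [Set.mem_insert_iff, Set.mem_singleton_iff, not_or] at hy'
        obtain ⟨hyx, hyxa⟩ := hy'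
        set e := x + y with he
        have hxe : x + e = y := c2' x y
        have he0 : e ≠ 0 := by
          intro hc
          apply hyx
          rw [← hxe, hc, add_zero]
        have hea : e ≠ a := by
          intro hc
          exact hyxa (by rw [← hxe, hc])
        have hae : a ≠ e := fun hc => hea hc.symm
        have hae0 : a + e ≠ 0 := fun hc => hae ((eq_iff_add a e).mpr hc)
        have hx' : F (x + a) + F x = b := hx
        have hy' : F (y + a) + F y = b := hy
        have hFxa : F (x + a) = b + F x := by
          rw [eq_iff_add, ← hx']
          simp [c2, c2', add_assoc, add_comm, add_left_comm]
        have hFya : F (y + a) = b + F y := by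
          rw [eq_iff_add, ← hy']
          simp [c2, c2', add_assoc, add_comm, add_left_comm]
        -- the key vanishing: cubeSum over the plane directions a, e
        have Bae : cubeSum F 2 x ![a, e] = 0 := by
          rw [key2]
          have r1 : x + e = y := hxe
          have r2 : x + (a + e) = y + a := by rw [← hxe]; abel
          rw [r1, r2, hFxa, hFya]
          simp [c2, c2', add_assoc, add_comm, add_left_comm]
        -- all cube sums over span{a,e} vanish
        have Zmain : ∀ A B : Fin n → ZMod 2,
            (A = 0 ∨ A = a ∨ A = e ∨ A = a + e) → (B = 0 ∨ B = a ∨ B = e ∨ B = a + e) →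
            ∀ p, cubeSum F 2 p ![A, B] = 0 := by
          intro A B hA hB p
          rw [baseInd p x A B]
          have Bea : cubeSum F 2 x ![e, a] = 0 := by rw [← Bsymm]; exact Bae
          rcases hA with hA | hA | hA | hA <;> rcases hB with hB | hB | hB | hB <;> rw [hA, hB]
          · exact Bzero_left x 0
          · exact Bzero_left x a
          · exact Bzero_left x e
          · exact Bzero_left x (a + e)
          · exact Bzero_right x a
          · exact Bdiag x a
          · exact Bae
          · rw [Badd, Bdiag, Bae, add_zero]
          · exact Bzero_right x e
          · exact Bea
          · exact Bdiag x e
          · rw [Badd, Bea, Bdiag, add_zero]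
          · exact Bzero_right x (a + e)
          · rw [Bsymm, Badd, Bdiag, Bae, add_zero]
          · rw [Bsymm, Badd, Bea, Bdiag, add_zero]
          · exact Bdiag x (a + e)
        -- build the affine plane
        set ψ : (Fin 2 → ZMod 2) → (Fin n → ZMod 2) := fun t => t 0 • a + t 1 • e with hψ
        set φ : (Fin 2 → ZMod 2) → (Fin n → ZMod 2) := fun t => x + ψ t with hφ
        have hψadd : ∀ s t, ψ (s + t) = ψ s + ψ t := by
          intro s t
          simp only [hψ, Pi.add_apply, add_smul]
          abel
        have hψmem : ∀ t, ψ t = 0 ∨ ψ t = a ∨ ψ t = e ∨ ψ t = a + e := by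
          intro t
          rcases zmod2_cases (t 0) with h0 | h0 <;> rcases zmod2_cases (t 1) with h1 | h1 <;>
            simp [hψ, h0, h1]
        have haffine : IsAffineF2 φ := by
          intro s t
          simp only [hφ, hψadd]
          have : ψ 0 = 0 := by simp [hψ]
          rw [this]
          simp [c2, c2', add_assoc, add_comm, add_left_comm]
        have hinj : Function.Injective φ := by
          intro s t hst
          simp only [hφ] at hst
          have hst' : ψ s = ψ t := by
            exact add_left_cancel hst
          have hsum : ψ s + ψ t = 0 := by rw [hst', c2]
          have hψst : ψ (s + t) = 0 := by rw [hψadd, hsum]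
          -- conclude s + t = 0
          have hst0 : s + t = 0 := by
            by_contra hc
            rcases zmod2_cases ((s + t) 0) with h0 | h0 <;>
              rcases zmod2_cases ((s + t) 1) with h1 | h1
            · exact hc (ext2 _ _ (by simp [h0]) (by simp [h1]))
            · rw [hψ] at hψst
              simp only [h0, h1, zero_smul, one_smul, zero_add] at hψst
              exact he0 hψst
            · rw [hψ] at hψst
              simp only [h0, h1, zero_smul, one_smul, add_zero] at hψst
              exact ha hψst
            · rw [hψ] at hψst
              simp only [h0, h1, one_smul] at hψst
              exact hae0 hψst
          have := congrArg (fun z => z + t) hst0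
          simpa [add_assoc, c2, eq_iff_add] using (eq_iff_add s t).mpr hst0
        obtain ⟨t, w, hw⟩ := adeg_two_exists (hyp φ haffine hinj)
        apply hw
        have hφstep : ∀ (t u : Fin 2 → ZMod 2), φ (t + u) = φ t + ψ u := by
          intro t u
          simp only [hφ, hψ, Pi.add_apply, add_smul]
          abel
        have hconv : cubeSum (F ∘ φ) 2 t w = cubeSum F 2 (φ t) ![ψ (w 0), ψ (w 1)] := by
          rw [cs2_expand, key2]
          simp only [Function.comp_apply, hφstep, hψadd]
        rw [hconv]
        exact Zmain (ψ (w 0)) (ψ (w 1)) (hψmem (w 0)) (hψmem (w 1)) (φ t)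
      calc ({x' : Fin n → ZMod 2 | F (x' + a) + F x' = b}).ncard
          ≤ ({x, x + a} : Set (Fin n → ZMod 2)).ncard :=
            Set.ncard_le_ncard hsub (Set.toFinite _)
        _ ≤ 2 := by
            apply le_trans (Set.ncard_insert_le _ _)
            simp
  · -- APN → restrictions have degree 2
    intro hAPN φ haff hinj
    apply adeg_eq_two_of
    · -- there is a nonzero 2-fold cube sum
      refine ⟨0, ![![(1 : ZMod 2), 0], ![0, 1]], ?_⟩
      intro hz
      set u := φ 0 with hu
      set A := φ ![(1 : ZMod 2), 0] + φ 0 with hA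
      set B := φ ![(0 : ZMod 2), 1] + φ 0 with hB
      have hφ1 : φ ![(1 : ZMod 2), 0] = u + A := by rw [hA, hu, eq_iff_add]; simp [c2, c2', add_assoc, add_comm, add_left_comm]
      have hφ2 : φ ![(0 : ZMod 2), 1] = u + B := by rw [hB, hu, eq_iff_add]; simp [c2, c2', add_assoc, add_comm, add_left_comm]
      have hsum12 : (![(1 : ZMod 2), 0] + ![0, 1] : Fin 2 → ZMod 2) = ![1, 1] := by
        funext i; fin_cases i <;> rfl
      have hφ3 : φ ![(1 : ZMod 2), 1] = u + (A + B) := by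
        have := haff ![(1 : ZMod 2), 0] ![0, 1]
        rw [hsum12] at this
        rw [this, hφ1, hφ2, ← hu]
        rw [eq_iff_add]
        simp [c2, c2', add_assoc, add_comm, add_left_comm]
      rw [cs2_expand] at hz
      simp only [Function.comp_apply, Matrix.cons_val_zero, Matrix.cons_val_one,
        Matrix.head_cons, zero_add] at hz
      rw [hsum12] at hz
      rw [hφ1, hφ2, hφ3, ← hu] at hz
      -- hz : F u + F (u + A) + F (u + B) + F (u + (A + B)) = 0
      have hA0 : A ≠ 0 := by
        intro hc
        have : φ ![(1 : ZMod 2), 0] = φ 0 := by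
          rw [hφ1, ← hu, hc, add_zero, hu]
        have h10 : (![(1 : ZMod 2), 0] : Fin 2 → ZMod 2) = 0 := hinj this
        have : (1 : ZMod 2) = 0 := by
          have := congrFun h10 0
          simpa using this
        simp at this
      have hB0 : B ≠ 0 := by
        intro hc
        have : φ ![(0 : ZMod 2), 1] = φ 0 := by
          rw [hφ2, ← hu, hc, add_zero, hu]
        have h10 : (![(0 : ZMod 2), 1] : Fin 2 → ZMod 2) = 0 := hinj this
        have : (1 : ZMod 2) = 0 := by
          have := congrFun h10 1
          simpa using this
        simp at this
      have hAB : A ≠ B := by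
        intro hc
        have : φ ![(1 : ZMod 2), 0] = φ ![(0 : ZMod 2), 1] := by rw [hφ1, hφ2, hc]
        have h10 := hinj this
        have : (1 : ZMod 2) = 0 := by
          have := congrFun h10 0
          simpa using this
        simp at this
      -- three distinct solutions of F (x + A) + F x = F (u + A) + F u
      set b := F (u + A) + F u with hb
      have mem1 : u ∈ {x | F (x + A) + F x = b} := rfl
      have mem2 : u + A ∈ {x | F (x + A) + F x = b} := by
        show F (u + A + A) + F (u + A) = b
        rw [hb, add_assoc, c2, add_zero]
        exact add_comm _ _
      have mem3 : u + B ∈ {x | F (x + A) + F x = b} := by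
        show F (u + B + A) + F (u + B) = b
        rw [hb, eq_iff_add, ← hz]
        simp [c2, c2', add_assoc, add_comm, add_left_comm]
      have hne1 : u ≠ u + A := by
        intro hc
        exact hA0 (by simpa using (left_eq_add.mp hc))
      have hne2 : u ≠ u + B := by
        intro hc
        exact hB0 (by simpa using (left_eq_add.mp hc))
      have hne3 : u + A ≠ u + B := by
        intro hc
        exact hAB (add_left_cancel hc)
      have hsub : ({u, u + A, u + B} : Set (Fin n → ZMod 2)) ⊆ {x | F (x + A) + F x = b} := by
        intro z hz'
        rcases hz' with rfl | rfl | rfl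
        · exact mem1
        · exact mem2
        · exact mem3
      have hcard : ({u, u + A, u + B} : Set (Fin n → ZMod 2)).ncard = 3 := by
        rw [Set.ncard_insert_of_notMem (by simp [hne1, hne2]),
          Set.ncard_insert_of_notMem (by simp [hne3]), Set.ncard_singleton]
      have hle := Set.ncard_le_ncard hsub (Set.toFinite _)
      have hAPN' := hAPN A hA0 b
      omega
    · intro k hk a v
      exact cs_dim (F ∘ φ) a v (by omega)
end

section
/- Let F: F_2^n → F_2^m be a function of degree r and let a, b be distinct nonzero elements of F_2^n with a + b ≠ 0. If the linear hyperplanes H_a = {x : a·x = 0} and H_b = {x : b·x = 0} are both degree-drop hyperplanes for F (i.e., deg(F|_{H_a}) < r and deg(F|_{H_b}) < r), then H_{a+b} is also a degree-drop hyperplane for F. -/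
open Classical

/-- `F` restricted to the linear hyperplane `H_c = {x | c · x = 0}` has degree `< r`:
for every injective linear parametrization `φ` of `H_c`, `deg (F ∘ φ) < r`. -/
def DropsOnHyp {n m : ℕ} (F : (Fin n → ZMod 2) → (Fin m → ZMod 2)) (r : ℕ)
    (c : Fin n → ZMod 2) : Prop :=
  ∀ (k : ℕ) (φ : (Fin k → ZMod 2) → (Fin n → ZMod 2)),
    IsLinearF2 φ → Function.Injective φ →
    Set.range φ = {x : Fin n → ZMod 2 | ∑ i, c i * x i = 0} →
    adeg (F ∘ φ) < ((r : ℕ) : WithBot ℕ)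

section helpers

variable {V : Type*} [AddCommGroup V] {μ : ℕ}

lemma wadd (x : Fin μ → ZMod 2) : x + x = 0 := by
  funext i; exact CharTwo.add_self_eq_zero _

lemma cancel2 {G : Type*} [AddCommGroup G] (h2 : ∀ x : G, x + x = 0) {x y : G}
    (h : x + y = 0) : x = y := by
  have h' : x + (y + y) = (x + y) + y := by abel
  rw [h2, h, add_zero, zero_add] at h'; exact h'

noncomputable def Gsum (f : V → Fin μ → ZMod 2) (k : ℕ) (j : Fin k) (v : Fin k → V) (z : V) :
    Fin μ → ZMod 2 :=
  ∑ S ∈ Finset.univ.filter (fun S : Finset (Fin k) => j ∉ S), f (z + ∑ i ∈ S, v i)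

lemma split_sum {γ : Type*} [AddCommMonoid γ] {k : ℕ} (j : Fin k) (g : Finset (Fin k) → γ) :
    ∑ S : Finset (Fin k), g S
      = ∑ S ∈ Finset.univ.filter (fun S : Finset (Fin k) => j ∉ S), (g S + g (insert j S)) := by
  classical
  rw [← Finset.sum_filter_add_sum_filter_not Finset.univ (fun S => j ∉ S) g,
    Finset.sum_add_distrib]
  congr 1
  refine Finset.sum_nbij' (fun S => S.erase j) (fun S => insert j S) ?_ ?_ ?_ ?_ ?_
  · intro S hS
    simp only [Finset.mem_filter, Finset.mem_univ, true_and, not_not] at hS ⊢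
    exact Finset.notMem_erase j S
  · intro S hS
    simp only [Finset.mem_filter, Finset.mem_univ, true_and, not_not] at hS ⊢
    exact Finset.mem_insert_self j S
  · intro S hS
    simp only [Finset.mem_filter, Finset.mem_univ, true_and, not_not] at hS
    exact Finset.insert_erase hS
  · intro S hS
    simp only [Finset.mem_filter, Finset.mem_univ, true_and] at hS
    exact Finset.erase_insert hS
  · intro S hS
    simp only [Finset.mem_filter, Finset.mem_univ, true_and, not_not] at hS
    rw [Finset.insert_erase hS]

lemma cube_split (f : V → Fin μ → ZMod 2) {k : ℕ} (j : Fin k) (a : V) (v : Fin k → V) :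
    cubeSum f k a v = Gsum f k j v a + Gsum f k j v (a + v j) := by
  classical
  unfold cubeSum Gsum
  rw [split_sum j, Finset.sum_add_distrib]
  congr 1
  refine Finset.sum_congr rfl fun S hS => ?_
  simp only [Finset.mem_filter, Finset.mem_univ, true_and] at hS
  rw [Finset.sum_insert hS]
  congr 1
  abel

lemma Gsum_congr (f : V → Fin μ → ZMod 2) {k : ℕ} (j : Fin k) {v w : Fin k → V} (z : V)
    (h : ∀ i, i ≠ j → v i = w i) : Gsum f k j v z = Gsum f k j w z := by
  unfold Gsum
  refine Finset.sum_congr rfl fun S hS => ?_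
  simp only [Finset.mem_filter, Finset.mem_univ, true_and] at hS
  have : ∑ i ∈ S, v i = ∑ i ∈ S, w i :=
    Finset.sum_congr rfl fun i hi => h i (fun hij => hS (hij ▸ hi))
  rw [this]

lemma Gsum_snoc (f : V → Fin μ → ZMod 2) {k : ℕ} (v : Fin k → V) (d : V) (z : V) :
    Gsum f (k + 1) (Fin.last k) (Fin.snoc v d) z = cubeSum f k z v := by
  classical
  unfold Gsum cubeSum
  refine Finset.sum_nbij' (fun S => S.preimage Fin.castSucc (Fin.castSucc_injective k).injOn)
    (fun T => T.map ⟨Fin.castSucc, Fin.castSucc_injective k⟩) ?_ ?_ ?_ ?_ ?_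
  · intro S hS; exact Finset.mem_univ _
  · intro T hT
    simp only [Finset.mem_filter, Finset.mem_univ, true_and, Finset.mem_map,
      Function.Embedding.coeFn_mk]
    rintro ⟨x, hx, hx'⟩
    exact (Fin.castSucc_lt_last x).ne hx'
  · intro S hS
    simp only [Finset.mem_filter, Finset.mem_univ, true_and] at hS
    ext y
    simp only [Finset.mem_map, Finset.mem_preimage, Function.Embedding.coeFn_mk]
    constructor
    · rintro ⟨x, hx, rfl⟩; exact hx
    · intro hy
      have hne : y ≠ Fin.last k := fun h => hS (h ▸ hy)
      exact ⟨y.castPred hne, by rwa [Fin.castSucc_castPred], Fin.castSucc_castPred y hne⟩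
  · intro T hT
    ext x
    simp [Finset.mem_preimage, Finset.mem_map, Function.Embedding.coeFn_mk,
      (Fin.castSucc_injective k).eq_iff]
  · intro S hS
    simp only [Finset.mem_filter, Finset.mem_univ, true_and] at hS
    have side : ∀ x ∈ S, x ∉ Set.range (Fin.castSucc : Fin k → Fin (k+1)) →
        (@Fin.snoc k (fun _ => V) v d x) = 0 := by
      intro x hx hx'
      have hne : x ≠ Fin.last k := fun h => hS (h ▸ hx)
      exact absurd ⟨x.castPred hne, Fin.castSucc_castPred x hne⟩ hx'
    have key : ∑ i ∈ S.preimage Fin.castSucc (Fin.castSucc_injective k).injOn, v i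
        = ∑ i ∈ S, Fin.snoc v d i := by
      rw [← Finset.sum_preimage Fin.castSucc S (Fin.castSucc_injective k).injOn
        (Fin.snoc v d) side]
      exact Finset.sum_congr rfl fun i _ => by simp
    rw [key]


lemma cube_base_inv (f : V → Fin μ → ZMod 2) {k : ℕ} (hV : ∀ x : V, x + x = 0)
    (htop : ∀ x u, cubeSum f (k + 1) x u = 0) (x y : V) (v : Fin k → V) :
    cubeSum f k x v = cubeSum f k y v := by
  have h0 := htop x (Fin.snoc v (x + y))
  rw [cube_split f (Fin.last k)] at h0
  rw [Fin.snoc_last] at h0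
  have hxy : x + (x + y) = y := by
    rw [← add_assoc, hV, zero_add]
  rw [hxy, Gsum_snoc, Gsum_snoc] at h0
  exact cancel2 (fun z => wadd z) h0

lemma cube_update (f : V → Fin μ → ZMod 2) {k : ℕ} (hV : ∀ x : V, x + x = 0)
    (htop : ∀ x u, cubeSum f (k + 1) x u = 0) (x : V) (v : Fin k → V) (j : Fin k) (p q : V) :
    cubeSum f k x (Function.update v j (p + q))
      = cubeSum f k x (Function.update v j p) + cubeSum f k x (Function.update v j q) := by
  classical
  have hG : ∀ (s : V) (z : V), cubeSum f k z (Function.update v j s)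
      = Gsum f k j v z + Gsum f k j v (z + s) := by
    intro s z
    rw [cube_split f j]
    rw [Gsum_congr f j z (fun i hij => Function.update_of_ne hij s v),
      Function.update_self,
      Gsum_congr f j (z + s) (fun i hij => Function.update_of_ne hij s v)]
  have key : Gsum f k j v x + Gsum f k j v (x + q)
      = Gsum f k j v (x + p) + Gsum f k j v (x + p + q) := by
    have := cube_base_inv f hV htop x (x + p) (Function.update v j q)
    rw [hG q x, hG q (x + p)] at this
    exact this
  rw [hG, hG, hG]
  calc Gsum f k j v x + Gsum f k j v (x + (p + q))
      = Gsum f k j v x + Gsum f k j v (x + p + q) := by rw [add_assoc]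
    _ = Gsum f k j v x + ((Gsum f k j v (x + p) + Gsum f k j v (x + p))
          + Gsum f k j v (x + p + q)) := by rw [wadd, zero_add]
    _ = (Gsum f k j v x + Gsum f k j v (x + p))
          + (Gsum f k j v (x + p) + Gsum f k j v (x + p + q)) := by abel
    _ = (Gsum f k j v x + Gsum f k j v (x + p))
          + (Gsum f k j v x + Gsum f k j v (x + q)) := by rw [key]

lemma cube_zero_of_dep (f : V → Fin μ → ZMod 2) {k : ℕ} (hV : ∀ x : V, x + x = 0)
    (a : V) (v : Fin k → V) (U : Finset (Fin k)) (hne : U.Nonempty)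
    (hsum : ∑ i ∈ U, v i = 0) : cubeSum f k a v = 0 := by
  classical
  unfold cubeSum
  refine Finset.sum_involution (fun S _ => symmDiff S U) ?_ ?_ ?_ ?_
  · intro S _
    have hsym : ∑ i ∈ symmDiff S U, v i = ∑ i ∈ S, v i := by
      have hd : Disjoint (symmDiff S U) (S ∩ U) := by
        simpa [Finset.inf_eq_inter] using disjoint_symmDiff_inf S U
      have he : symmDiff S U ∪ (S ∩ U) = S ∪ U := by
        simpa [Finset.sup_eq_union, Finset.inf_eq_inter] using symmDiff_sup_inf S U
      have h1 : ∑ i ∈ symmDiff S U, v i + ∑ i ∈ S ∩ U, v i = ∑ i ∈ S ∪ U, v i := by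
        rw [← Finset.sum_union hd, he]
      calc ∑ i ∈ symmDiff S U, v i
          = ∑ i ∈ symmDiff S U, v i + (∑ i ∈ S ∩ U, v i + ∑ i ∈ S ∩ U, v i) := by
            rw [hV, add_zero]
        _ = (∑ i ∈ symmDiff S U, v i + ∑ i ∈ S ∩ U, v i) + ∑ i ∈ S ∩ U, v i := by abel
        _ = ∑ i ∈ S ∪ U, v i + ∑ i ∈ S ∩ U, v i := by rw [h1]
        _ = ∑ i ∈ S, v i + ∑ i ∈ U, v i := Finset.sum_union_inter
        _ = ∑ i ∈ S, v i := by rw [hsum, add_zero]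
    rw [hsym]
    exact wadd _
  · intro S _ _
    intro hSU
    rw [symmDiff_eq_left] at hSU
    exact hne.ne_empty hSU
  · intro S _; exact Finset.mem_univ _
  · intro S _
    exact symmDiff_symmDiff_cancel_right U S

lemma exists_dep {p K : ℕ} (hpK : p < K) (v : Fin K → (Fin p → ZMod 2)) :
    ∃ U : Finset (Fin K), U.Nonempty ∧ ∑ i ∈ U, v i = 0 := by
  classical
  have hnli : ¬ LinearIndependent (ZMod 2) v := by
    intro h
    have := h.fintype_card_le_finrank
    rw [Fintype.card_fin, Module.finrank_fin_fun] at this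
    omega
  rw [Fintype.not_linearIndependent_iff] at hnli
  obtain ⟨g, hg, i0, hi0⟩ := hnli
  refine ⟨Finset.univ.filter (fun i => g i ≠ 0), ⟨i0, by simp [hi0]⟩, ?_⟩
  rw [← hg, Finset.sum_filter]
  refine Finset.sum_congr rfl fun i _ => ?_
  have hz : ∀ z : ZMod 2, z = 0 ∨ z = 1 := by decide
  rcases hz (g i) with h | h
  · simp [h]
  · simp [h]


lemma adeg_lt_of_cube (f : V → Fin μ → ZMod 2) (r : ℕ)
    (h : ∀ k, r ≤ k → ∀ a v, cubeSum f k a v = 0) : adeg f < ((r : ℕ) : WithBot ℕ) := by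
  unfold adeg
  split
  · rename_i hex
    obtain ⟨k0, a0, v0, hk0⟩ := hex
    set S : Set ℕ := {k : ℕ | ∃ a v, cubeSum f k a v ≠ 0} with hSdef
    have hbd : ∀ k ∈ S, k < r := by
      intro k hk
      by_contra hkr
      obtain ⟨a, v, hz⟩ := hk
      exact hz (h k (le_of_not_gt hkr) a v)
    have hne : S.Nonempty := ⟨k0, a0, v0, hk0⟩
    have hbdd : BddAbove S := ⟨r, fun k hk => (hbd k hk).le⟩
    have hmem := Nat.sSup_mem hne hbdd
    exact_mod_cast hbd _ hmem
  · exact_mod_cast WithBot.bot_lt_coe r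

lemma cube_zero_of_adeg_lt {p : ℕ} (f : (Fin p → ZMod 2) → (Fin μ → ZMod 2)) {r : ℕ}
    (hr : adeg f < ((r : ℕ) : WithBot ℕ)) {k : ℕ} (hk : r ≤ k) (a : Fin p → ZMod 2)
    (v : Fin k → (Fin p → ZMod 2)) : cubeSum f k a v = 0 := by
  by_contra hz
  set S : Set ℕ := {k : ℕ | ∃ a v, cubeSum f k a v ≠ 0} with hSdef
  have hkS : k ∈ S := ⟨a, v, hz⟩
  have hbdd : BddAbove S := by
    refine ⟨p, fun k' hk' => ?_⟩
    by_contra hpk'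
    obtain ⟨a', v', hz'⟩ := hk'
    obtain ⟨U, hUne, hUsum⟩ := exists_dep (lt_of_not_ge hpk') v'
    exact hz' (cube_zero_of_dep f (fun z => wadd z) a' v' U hUne hUsum)
  have hex : ∃ k : ℕ, ∃ a v, cubeSum f k a v ≠ 0 := ⟨k, a, v, hz⟩
  unfold adeg at hr
  rw [dif_pos hex] at hr
  have hle : k ≤ sSup S := le_csSup hbdd hkS
  have : ((r : ℕ) : WithBot ℕ) ≤ ((sSup S : ℕ) : WithBot ℕ) := by
    exact_mod_cast hk.trans hle
  exact absurd hr (not_lt.2 this)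

lemma cube_zero_of_adeg_eq {p : ℕ} (f : (Fin p → ZMod 2) → (Fin μ → ZMod 2)) {r : ℕ}
    (hf : adeg f = ((r : ℕ) : WithBot ℕ)) {k : ℕ} (hk : r < k) (a : Fin p → ZMod 2)
    (v : Fin k → (Fin p → ZMod 2)) : cubeSum f k a v = 0 := by
  by_contra hz
  set S : Set ℕ := {k : ℕ | ∃ a v, cubeSum f k a v ≠ 0} with hSdef
  have hkS : k ∈ S := ⟨a, v, hz⟩
  have hbdd : BddAbove S := by
    refine ⟨p, fun k' hk' => ?_⟩
    by_contra hpk'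
    obtain ⟨a', v', hz'⟩ := hk'
    obtain ⟨U, hUne, hUsum⟩ := exists_dep (lt_of_not_ge hpk') v'
    exact hz' (cube_zero_of_dep f (fun z => wadd z) a' v' U hUne hUsum)
  have hex : ∃ k : ℕ, ∃ a v, cubeSum f k a v ≠ 0 := ⟨k, a, v, hz⟩
  unfold adeg at hf
  rw [dif_pos hex] at hf
  have hsup : sSup S = r := by exact_mod_cast hf
  have hle : k ≤ sSup S := le_csSup hbdd hkS
  omega

lemma cube_comp {V₂ : Type*} [AddCommGroup V₂] (f : V₂ → Fin μ → ZMod 2) (φ : V → V₂)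
    (hφ : IsLinearF2 φ) (k : ℕ) (x : V) (v : Fin k → V) :
    cubeSum (f ∘ φ) k x v = cubeSum f k (φ x) (φ ∘ v) := by
  classical
  let ψ : V →+ V₂ := AddMonoidHom.mk' φ (fun x y => hφ x y)
  unfold cubeSum
  refine Finset.sum_congr rfl fun S _ => ?_
  have : φ (x + ∑ i ∈ S, v i) = φ x + ∑ i ∈ S, φ (v i) := by
    rw [show φ = ⇑ψ from rfl, map_add, map_sum]
  simp only [Function.comp_apply, this]


section dot
variable {n : ℕ}

def dotp (c x : Fin n → ZMod 2) : ZMod 2 := ∑ i, c i * x i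

lemma dotp_single (c : Fin n → ZMod 2) (j : Fin n) : dotp c (Pi.single j 1) = c j := by
  unfold dotp
  rw [Finset.sum_eq_single j]
  · simp
  · intro i _ hij; simp [Pi.single_apply, hij]
  · intro h; exact absurd (Finset.mem_univ j) h

lemma dotp_add (c x y : Fin n → ZMod 2) : dotp c (x + y) = dotp c x + dotp c y := by
  unfold dotp
  rw [← Finset.sum_add_distrib]
  exact Finset.sum_congr rfl fun i _ => by simp [mul_add]

lemma dotp_smul (c : Fin n → ZMod 2) (s : ZMod 2) (x : Fin n → ZMod 2) :
    dotp c (s • x) = s * dotp c x := by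
  unfold dotp
  rw [Finset.mul_sum]
  exact Finset.sum_congr rfl fun i _ => by
    simp [Pi.smul_apply, smul_eq_mul]; ring

lemma dotp_eq (c d : Fin n → ZMod 2) (h : ∀ x, dotp c x = dotp d x) : c = d := by
  funext j
  rw [← dotp_single c j, ← dotp_single d j, h]

lemma exists_dotp_one {c : Fin n → ZMod 2} (hc : c ≠ 0) : ∃ z, dotp c z = 1 := by
  have : ∃ j, c j ≠ 0 := by
    by_contra h
    push_neg at h
    exact hc (funext fun j => h j)
  obtain ⟨j, hj⟩ := this
  have hz : ∀ z : ZMod 2, z = 0 ∨ z = 1 := by decide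
  refine ⟨Pi.single j 1, ?_⟩
  rw [dotp_single]
  rcases hz (c j) with h | h
  · exact absurd h hj
  · exact h

lemma zmod2_cancel {x y : ZMod 2} (h : x + y = 0) : x = y := by revert h; revert x y; decide

/-- existence of a vector on `H_c \ H_d` complement pattern: `c·u = 0`, `d·u = 1`. -/
lemma exists_sep {c d : Fin n → ZMod 2} (hc : c ≠ 0) (hd : d ≠ 0) (hcd : c ≠ d) :
    ∃ u, dotp c u = 0 ∧ dotp d u = 1 := by
  by_contra h
  push_neg at h
  have hz : ∀ z : ZMod 2, z = 0 ∨ z = 1 := by decide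
  have h' : ∀ u, dotp c u = 0 → dotp d u = 0 := by
    intro u hu
    rcases hz (dotp d u) with h0 | h1
    · exact h0
    · exact absurd h1 (h u hu)
  obtain ⟨z, hzc⟩ := exists_dotp_one hc
  have key : ∀ x, dotp d x = dotp c x * dotp d z := by
    intro x
    have hmem : dotp c (x + dotp c x • z) = 0 := by
      rw [dotp_add, dotp_smul, hzc, mul_one, CharTwo.add_self_eq_zero]
    have := h' _ hmem
    rw [dotp_add, dotp_smul] at this
    exact zmod2_cancel this
  rcases hz (dotp d z) with h0 | h1
  · refine hd (dotp_eq d 0 fun x => ?_)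
    rw [key, h0, mul_zero]
    simp [dotp]
  · refine hcd (dotp_eq c d fun x => ?_)
    rw [key, h1, mul_one]

/-- parametrization of the hyperplane `H_c`. -/
lemma exists_param {c : Fin n → ZMod 2} (hc : c ≠ 0) :
    ∃ φ : (Fin (n - 1) → ZMod 2) → (Fin n → ZMod 2), IsLinearF2 φ ∧ Function.Injective φ ∧
      Set.range φ = {x : Fin n → ZMod 2 | ∑ i, c i * x i = 0} := by
  classical
  let ℓ : (Fin n → ZMod 2) →ₗ[ZMod 2] ZMod 2 :=
    { toFun := fun x => ∑ i, c i * x i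
      map_add' := fun x y => by
        rw [← Finset.sum_add_distrib]
        exact Finset.sum_congr rfl fun i _ => by simp [mul_add]
      map_smul' := fun s x => by
        simp only [RingHom.id_apply, smul_eq_mul, Finset.mul_sum]
        exact Finset.sum_congr rfl fun i _ => by
          simp [Pi.smul_apply, smul_eq_mul]; ring }
  obtain ⟨z, hzc⟩ := exists_dotp_one hc
  have hℓz : ℓ z = 1 := hzc
  have hrange : LinearMap.range ℓ = ⊤ := by
    rw [Submodule.eq_top_iff']
    intro x
    have : x = x • (1 : ZMod 2) := by rw [smul_eq_mul, mul_one]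
    rw [this, ← hℓz]
    exact Submodule.smul_mem _ x (LinearMap.mem_range_self ℓ z)
  have hker : Module.finrank (ZMod 2) (LinearMap.ker ℓ) = n - 1 := by
    have h1 := LinearMap.finrank_range_add_finrank_ker ℓ
    rw [Module.finrank_fin_fun, hrange] at h1
    have h2 : Module.finrank (ZMod 2) (⊤ : Submodule (ZMod 2) (ZMod 2)) = 1 := by
      rw [finrank_top, Module.finrank_self]
    rw [h2] at h1
    omega
  have hfr : Module.finrank (ZMod 2) (Fin (n - 1) → ZMod 2)
      = Module.finrank (ZMod 2) (LinearMap.ker ℓ) := by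
    rw [Module.finrank_fin_fun, hker]
  obtain ⟨ψ⟩ := FiniteDimensional.nonempty_linearEquiv_of_finrank_eq hfr
  refine ⟨fun x => (ψ x : Fin n → ZMod 2), ?_, ?_, ?_⟩
  · intro x y
    show ((ψ (x + y) : LinearMap.ker ℓ) : Fin n → ZMod 2) = _
    rw [map_add]; rfl
  · intro x y hxy
    exact ψ.injective (Subtype.val_injective hxy)
  · ext x
    constructor
    · rintro ⟨y, rfl⟩
      exact (ψ y).2
    · intro hx
      exact ⟨ψ.symm ⟨x, hx⟩, by simp⟩

end dot


lemma dotp_add_left {n : ℕ} (c d x : Fin n → ZMod 2) :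
    dotp (c + d) x = dotp c x + dotp d x := by
  unfold dotp
  rw [← Finset.sum_add_distrib]
  exact Finset.sum_congr rfl fun i _ => by simp [add_mul]


/-- Let `F : F_2^n → F_2^m` have degree `r` and let `a ≠ b` be nonzero vectors. If the
hyperplanes `H_a` and `H_b` are both degree-drop hyperplanes for `F`, then so is
`H_{a+b}` (note `a + b ≠ 0`). -/
theorem stmt8 {n m : ℕ} (r : ℕ) (F : (Fin n → ZMod 2) → (Fin m → ZMod 2))
    (hF : adeg F = ((r : ℕ) : WithBot ℕ))
    (a b : Fin n → ZMod 2) (ha : a ≠ 0) (hb : b ≠ 0) (hab : a ≠ b)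
    (hda : DropsOnHyp F r a) (hdb : DropsOnHyp F r b) :
    DropsOnHyp F r (a + b) := by
  classical
  intro k φ hlin hinj hrange
  have hz2 : ∀ z : ZMod 2, z = 0 ∨ z = 1 := by decide
  have hV : ∀ x : Fin n → ZMod 2, x + x = 0 := fun x => wadd x
  obtain ⟨u1, hu1a, hu1b⟩ := exists_sep ha hb hab
  obtain ⟨w1, hw1b, hw1a⟩ := exists_sep hb ha (Ne.symm hab)
  set t := u1 + w1 with ht
  have hta : dotp a t = 1 := by rw [ht, dotp_add, hu1a, hw1a, zero_add]
  have htb : dotp b t = 1 := by rw [ht, dotp_add, hu1b, hw1b, add_zero]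
  have htop1 : ∀ x u, cubeSum F (r + 1) x u = 0 :=
    fun x u => cube_zero_of_adeg_eq F hF (Nat.lt_succ_self r) x u
  have hBI : ∀ x y v, cubeSum F r x v = cubeSum F r y v :=
    fun x y v => cube_base_inv F hV htop1 x y v
  have hmul := fun x v j p q => cube_update F hV htop1 x v j p q
  -- killing lemma on a hyperplane
  have hkill : ∀ (c : Fin n → ZMod 2), c ≠ 0 → DropsOnHyp F r c →
      ∀ (y : Fin n → ZMod 2) (v : Fin r → Fin n → ZMod 2), (∀ i, dotp c (v i) = 0) →
        cubeSum F r y v = 0 := by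
    intro c hc hd y v hv
    obtain ⟨φc, hφlin, hφinj, hφrange⟩ := exists_param hc
    have hlt := hd (n - 1) φc hφlin hφinj hφrange
    have hmem : ∀ i, v i ∈ Set.range φc := by
      intro i; rw [hφrange]; exact hv i
    choose v' hv' using hmem
    rw [hBI y (φc 0) v]
    have hveq : v = φc ∘ v' := funext fun i => (hv' i).symm
    rw [hveq, ← cube_comp F φc hφlin r 0 v']
    exact cube_zero_of_adeg_lt (F ∘ φc) hlt (le_refl r) 0 v'
  have hHa := hkill a ha hda
  have hHb := hkill b hb hdb
  -- main claim at level r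
  have main : ∀ (y : Fin n → ZMod 2) (v : Fin r → Fin n → ZMod 2),
      (∀ i, dotp a (v i) = dotp b (v i)) → cubeSum F r y v = 0 := by
    intro y
    have Q : ∀ c : Finset (Fin r), ∀ v : Fin r → Fin n → ZMod 2,
        (∀ i, i ∉ c → (dotp a (v i) = 0 ∧ dotp b (v i) = 0) ∨ v i = t) →
        (∀ i, i ∈ c → dotp a (v i) = dotp b (v i)) → cubeSum F r y v = 0 := by
      intro c
      induction c using Finset.induction_on with
      | empty =>
        intro v hv _
        by_cases h2 : ∃ i j : Fin r, i ≠ j ∧ v i = t ∧ v j = t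
        · obtain ⟨i, j, hij, hvi, hvj⟩ := h2
          refine cube_zero_of_dep F hV y v {i, j} ⟨i, Finset.mem_insert_self i {j}⟩ ?_
          rw [Finset.sum_pair hij, hvi, hvj, hV]
        · by_cases h1 : ∃ j, v j = t
          · obtain ⟨j0, hj0⟩ := h1
            have hK : ∀ i, i ≠ j0 → dotp a (v i) = 0 ∧ dotp b (v i) = 0 := by
              intro i hi
              rcases hv i (Finset.notMem_empty i) with h | h
              · exact h
              · exact absurd ⟨i, j0, hi, h, hj0⟩ h2
            have hca : ∀ i, dotp a (Function.update v j0 u1 i) = 0 := by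
              intro i
              by_cases hij : i = j0
              · rw [hij, Function.update_self]; exact hu1a
              · rw [Function.update_of_ne hij]; exact (hK i hij).1
            have hcb : ∀ i, dotp b (Function.update v j0 w1 i) = 0 := by
              intro i
              by_cases hij : i = j0
              · rw [hij, Function.update_self]; exact hw1b
              · rw [Function.update_of_ne hij]; exact (hK i hij).2
            have hsplit : cubeSum F r y v
                = cubeSum F r y (Function.update v j0 u1)
                  + cubeSum F r y (Function.update v j0 w1) := by
              rw [← hmul y v j0 u1 w1, ← ht, ← hj0, Function.update_eq_self]
            rw [hsplit, hHa y _ hca, hHb y _ hcb, add_zero]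
          · push_neg at h1
            refine hHa y v fun i => ?_
            rcases hv i (Finset.notMem_empty i) with h | h
            · exact h.1
            · exact absurd h (h1 i)
      | @insert j c hj ih =>
        intro v hv hc'
        by_cases hgood : (dotp a (v j) = 0 ∧ dotp b (v j) = 0) ∨ v j = t
        · refine ih v (fun i hi => ?_) (fun i hi => hc' i (Finset.mem_insert_of_mem hi))
          by_cases hij : i = j
          · rw [hij]; exact hgood
          · exact hv i (by simp [Finset.mem_insert, hij, hi])
        · have hj' : dotp a (v j) = dotp b (v j) := hc' j (Finset.mem_insert_self j c)
          have h1 : dotp a (v j) = 1 := by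
            rcases hz2 (dotp a (v j)) with h | h
            · have hbj : dotp b (v j) = 0 := by rw [← hj']; exact h
              exact absurd (Or.inl ⟨h, hbj⟩) hgood
            · exact h
          have hKa : dotp a (v j + t) = 0 := by
            rw [dotp_add, h1, hta]; decide
          have hKb : dotp b (v j + t) = 0 := by
            rw [dotp_add, ← hj', h1, htb]; decide
          have hsplit : cubeSum F r y v
              = cubeSum F r y (Function.update v j (v j + t))
                + cubeSum F r y (Function.update v j t) := by
            rw [← hmul y v j (v j + t) t,
              show v j + t + t = v j by rw [add_assoc, hV, add_zero],
              Function.update_eq_self]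
          have ca1 : ∀ i, i ∉ c →
              (dotp a (Function.update v j (v j + t) i) = 0
                ∧ dotp b (Function.update v j (v j + t) i) = 0)
              ∨ Function.update v j (v j + t) i = t := by
            intro i hi
            by_cases hij : i = j
            · subst hij; rw [Function.update_self]; exact Or.inl ⟨hKa, hKb⟩
            · rw [Function.update_of_ne hij]
              exact hv i (by simp [Finset.mem_insert, hij, hi])
          have ca2 : ∀ i, i ∈ c → dotp a (Function.update v j (v j + t) i)
              = dotp b (Function.update v j (v j + t) i) := by
            intro i hi
            have hij : i ≠ j := fun h => hj (h ▸ hi)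
            rw [Function.update_of_ne hij]
            exact hc' i (Finset.mem_insert_of_mem hi)
          have cb1 : ∀ i, i ∉ c →
              (dotp a (Function.update v j t i) = 0
                ∧ dotp b (Function.update v j t i) = 0)
              ∨ Function.update v j t i = t := by
            intro i hi
            by_cases hij : i = j
            · subst hij; rw [Function.update_self]; exact Or.inr rfl
            · rw [Function.update_of_ne hij]
              exact hv i (by simp [Finset.mem_insert, hij, hi])
          have cb2 : ∀ i, i ∈ c → dotp a (Function.update v j t i)
              = dotp b (Function.update v j t i) := by
            intro i hi
            have hij : i ≠ j := fun h => hj (h ▸ hi)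
            rw [Function.update_of_ne hij]
            exact hc' i (Finset.mem_insert_of_mem hi)
          rw [hsplit, ih _ ca1 ca2, ih _ cb1 cb2, add_zero]
    intro v hv
    exact Q Finset.univ v (fun i hi => absurd (Finset.mem_univ i) hi) (fun i _ => hv i)
  -- conclude
  refine adeg_lt_of_cube (F ∘ φ) r ?_
  intro K hK x v
  rw [cube_comp F φ hlin K x v]
  rcases Nat.lt_or_ge r K with hlt | hge
  · exact cube_zero_of_adeg_eq F hF hlt _ _
  · have hKr : K = r := le_antisymm hge hK
    subst hKr
    refine main (φ x) (φ ∘ v) fun i => ?_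
    have hmem : φ (v i) ∈ Set.range φ := ⟨v i, rfl⟩
    rw [hrange] at hmem
    have hmem' : dotp (a + b) (φ (v i)) = 0 := hmem
    rw [dotp_add_left] at hmem'
    exact zmod2_cancel hmem'
end helpers
end

section
/- Let F(x) = x^d be a power function on F_{2^n} with 1 ≤ d ≤ 2^n - 1, of algebraic degree r = w_H(d) < n. For every F_2-linear subspace A of F_{2^n} of codimension k with 1 ≤ k ≤ r, we have deg(F|_A) ≥ r - k. -/
open Classical

/-! ### Auxiliary development -/

set_option linter.unusedSectionVars false

section Basic
variable {V W : Type*} [AddCommGroup V] [AddCommGroup W]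

private def finsetBoolEquiv (α : Type*) [Fintype α] [DecidableEq α] :
    Finset α ≃ (α → Bool) where
  toFun S i := decide (i ∈ S)
  invFun ε := Finset.univ.filter (fun i => ε i = true)
  left_inv S := by ext i; simp
  right_inv ε := by funext i; simp

private lemma cubeSum_eq_bool (f : V → W) (K : ℕ) (a : V) (v : Fin K → V) :
    cubeSum f K a v = ∑ ε : Fin K → Bool, f (a + ∑ i, if ε i then v i else 0) := by
  unfold cubeSum
  refine Fintype.sum_equiv (finsetBoolEquiv (Fin K)) _ _ (fun S => ?_)
  congr 1
  simp only [finsetBoolEquiv, Equiv.coe_fn_mk, decide_eq_true_eq]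
  rw [Finset.sum_ite_mem, Finset.univ_inter]

private lemma cubeSum_zero (f : V → W) (a : V) (v : Fin 0 → V) :
    cubeSum f 0 a v = f a := by
  rw [cubeSum_eq_bool]
  have : ∀ ε : Fin 0 → Bool, f (a + ∑ i, if ε i then v i else 0) = f a := by
    intro ε; simp
  rw [Fintype.sum_congr _ _ this]
  simp [Finset.card_univ]

private lemma cubeSum_succ (f : V → W) (K : ℕ) (a : V) (v : Fin (K + 1) → V) :
    cubeSum f (K + 1) a v
      = cubeSum (fun x => f x + f (x + v 0)) K a (fun i => v i.succ) := by
  rw [cubeSum_eq_bool, cubeSum_eq_bool]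
  rw [← Equiv.sum_comp (Fin.consEquiv (fun _ : Fin (K+1) => Bool))]
  rw [Fintype.sum_prod_type, Fintype.sum_bool]
  have h1 : ∀ (b : Bool) (ε : Fin K → Bool),
      (∑ i : Fin (K+1), if (Fin.consEquiv (fun _ : Fin (K+1) => Bool)) (b, ε) i then v i else 0)
      = (if b then v 0 else 0) + ∑ i : Fin K, if ε i then v i.succ else 0 := by
    intro b ε
    rw [Fin.sum_univ_succ]
    simp [Fin.consEquiv]
  rw [Finset.sum_add_distrib]
  rw [add_comm]
  congr 1
  · apply Fintype.sum_congr; intro ε; rw [h1]; simp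
  · apply Fintype.sum_congr; intro ε; rw [h1]; simp; abel

private lemma cubeSum_addf (f g : V → W) (K : ℕ) (a : V) (v : Fin K → V) :
    cubeSum (fun x => f x + g x) K a v = cubeSum f K a v + cubeSum g K a v := by
  simp [cubeSum, Finset.sum_add_distrib]

private lemma cubeSum_shift (f : V → W) (w : V) (K : ℕ) (a : V) (v : Fin K → V) :
    cubeSum (fun x => f (x + w)) K a v = cubeSum f K (a + w) v := by
  unfold cubeSum
  apply Finset.sum_congr rfl
  intro S _
  abel_nf

end Basic

/-- `f` has algebraic degree at most `p` (all larger cube sums vanish). -/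
private def DegLE {V W : Type*} [AddCommGroup V] [AddCommGroup W] (f : V → W) (p : ℕ) : Prop :=
  ∀ K, p < K → ∀ a v, cubeSum f K a v = 0

section Char2
variable {V W : Type*} [AddCommGroup V] [CommRing W] [CharP W 2]

private lemma DegLE.mono {f : V → W} {p q : ℕ} (h : DegLE f p) (hpq : p ≤ q) : DegLE f q :=
  fun K hK a v => h K (lt_of_le_of_lt hpq hK) a v

private lemma two_zero : (2 : W) = 0 := CharTwo.two_eq_zero

private lemma degLE_const (c : W) : DegLE (fun _ : V => c) 0 := by
  intro K hK a v
  obtain ⟨K', rfl⟩ : ∃ K', K = K' + 1 := ⟨K - 1, by omega⟩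
  rw [cubeSum_succ]
  have h : (fun x : V => (fun _ : V => c) x + (fun _ : V => c) (x + v 0)) = fun _ : V => (0 : W) := by
    funext x
    show c + c = 0
    linear_combination c * (two_zero (W := W))
  rw [h]
  simp [cubeSum]

private lemma degLE_additive {f : V → W} (hf : IsLinearF2 f) : DegLE f 1 := by
  intro K hK a v
  obtain ⟨K', rfl⟩ : ∃ K', K = K' + 1 := ⟨K - 1, by omega⟩
  rw [cubeSum_succ]
  have h : (fun x => f x + f (x + v 0)) = fun _ : V => f (v 0) := by
    funext x
    rw [hf x (v 0)]
    linear_combination (f x) * (two_zero (W := W))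
  rw [h]
  exact degLE_const (f (v 0)) K' (by omega) a _

private lemma const_of_degLE_zero {f : V → W} (hf : DegLE f 0) (x : V) : f x = f 0 := by
  have h1 := hf 1 one_pos 0 (fun _ => x)
  have h2 : cubeSum f 1 0 (fun _ => x) = f 0 + f (0 + x) := by
    rw [cubeSum_succ, cubeSum_zero]
  rw [h2, zero_add] at h1
  linear_combination h1 - (f 0) * (two_zero (W := W))

private lemma cubeSum_mul_left (c : W) (g : V → W) (K : ℕ) (a : V) (v : Fin K → V) :
    cubeSum (fun x => c * g x) K a v = c * cubeSum g K a v := by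
  simp [cubeSum, Finset.mul_sum]

private lemma degLE_mul_const_left {f g : V → W} {q : ℕ} (hf : DegLE f 0) (hg : DegLE g q) :
    DegLE (fun x => f x * g x) q := by
  have h : (fun x => f x * g x) = fun x => f 0 * g x := by
    funext x; rw [const_of_degLE_zero hf x]
  rw [h]
  intro K hK a v
  rw [cubeSum_mul_left, hg K hK a v, mul_zero]

private lemma degLE_mul_aux :
    ∀ (N p q : ℕ) (f g : V → W), p + q ≤ N → DegLE f p → DegLE g q →
      DegLE (fun x => f x * g x) (p + q) := by
  intro N
  induction N with
  | zero =>
    intro p q f g hle hf hg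
    have hp : p = 0 := by omega
    have hq : q = 0 := by omega
    subst hp; subst hq
    exact degLE_mul_const_left hf hg
  | succ N ih =>
    intro p q f g hle hf hg
    match p, q with
    | 0, q => exact (degLE_mul_const_left hf hg).mono (by omega)
    | p + 1, 0 =>
      have h : (fun x => f x * g x) = fun x => g x * f x := by
        funext x; ring
      rw [h]
      exact (degLE_mul_const_left hg hf).mono (by omega)
    | p' + 1, q' + 1 =>
      intro K hK a v
      obtain ⟨K'', rfl⟩ : ∃ K'', K = K'' + 1 := ⟨K - 1, by omega⟩
      rw [cubeSum_succ]
      set w := v 0 with hw0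
      have key : (fun x => (fun x => f x * g x) x + (fun x => f x * g x) (x + w))
          = fun x => ((f x + f (x + w)) * g (x + w)) + (f x * (g x + g (x + w))) := by
        funext x
        show f x * g x + f (x + w) * g (x + w) = _
        linear_combination (-(f x * g (x + w))) * (two_zero (W := W))
      rw [key, cubeSum_addf]
      have hDf : DegLE (fun x => f x + f (x + w)) p' := by
        intro K0 hK0 a0 v0
        have hcs := cubeSum_succ f K0 a0 (Fin.cons w v0)
        simp only [Fin.cons_zero, Fin.cons_succ] at hcs
        rw [← hcs]
        exact hf (K0 + 1) (by omega) a0 _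
      have hτg : DegLE (fun x => g (x + w)) (q' + 1) := by
        intro K0 hK0 a0 v0
        rw [cubeSum_shift]
        exact hg K0 hK0 _ _
      have hDg : DegLE (fun x => g x + g (x + w)) q' := by
        intro K0 hK0 a0 v0
        have hcs := cubeSum_succ g K0 a0 (Fin.cons w v0)
        simp only [Fin.cons_zero, Fin.cons_succ] at hcs
        rw [← hcs]
        exact hg (K0 + 1) (by omega) a0 _
      have t1 := ih p' (q' + 1) _ _ (by omega) hDf hτg
      have t2 := ih (p' + 1) q' _ _ (by omega) hf hDg
      rw [t1 K'' (by omega) a _, t2 K'' (by omega) a _, add_zero]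

private lemma degLE_mul {f g : V → W} {p q : ℕ} (hf : DegLE f p) (hg : DegLE g q) :
    DegLE (fun x => f x * g x) (p + q) :=
  degLE_mul_aux (p + q) p q f g le_rfl hf hg

private lemma degLE_prod (L : List (V → W)) (h : ∀ f ∈ L, IsLinearF2 f) :
    DegLE (fun x => (L.map (fun f => f x)).prod) L.length := by
  induction L with
  | nil => simpa using degLE_const (1 : W)
  | cons f L ih =>
    have h1 : DegLE f 1 := degLE_additive (h f (by simp))
    have h2 := ih (fun g hg => h g (by simp [hg]))
    have h3 := degLE_mul h1 h2
    have h4 : (fun x => f x * (L.map (fun f => f x)).prod)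
        = fun x => ((f :: L).map (fun f => f x)).prod := by
      funext x; simp
    rw [h4] at h3
    simpa [Nat.add_comm] using h3

end Char2

/-! ### Arithmetic of Hamming weights -/

private lemma hw_two_mul_add (q b : ℕ) (hb : b < 2) : hw (2 * q + b) = hw q + b := by
  rcases Nat.eq_zero_or_pos (2 * q + b) with h | h
  · have hq : q = 0 := by omega
    have hb0 : b = 0 := by omega
    subst hq; subst hb0; simp [hw]
  · unfold hw
    rw [Nat.digits_def' (by norm_num : (1:ℕ) < 2) h]
    have h1 : (2 * q + b) % 2 = b := by omega
    have h2 : (2 * q + b) / 2 = q := by omega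
    rw [h1, h2, List.sum_cons]
    omega

private lemma hw_split (d : ℕ) : hw d = hw (d / 2) + d % 2 := by
  conv_lhs => rw [show d = 2 * (d / 2) + d % 2 by omega]
  exact hw_two_mul_add _ _ (by omega)

private lemma hw_exists_list : ∀ d : ℕ, ∃ L : List ℕ, d = (L.map (2 ^ ·)).sum ∧ L.length = hw d := by
  intro d
  induction d using Nat.strong_induction_on with
  | _ d ih =>
    rcases Nat.eq_zero_or_pos d with h | h
    · exact ⟨[], by simp [h, hw]⟩
    · obtain ⟨L', hs, hl⟩ := ih (d / 2) (Nat.div_lt_self h (by norm_num))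
      have hsum2 : ∀ L : List ℕ, ((L.map (· + 1)).map (2 ^ ·)).sum = 2 * (L.map (2 ^ ·)).sum := by
        intro L
        induction L with
        | nil => simp
        | cons x L ihL =>
          simp only [List.map_cons, List.map_map, List.sum_cons] at ihL ⊢
          rw [ihL, pow_succ]; ring
      refine ⟨(if d % 2 = 1 then [0] else []) ++ L'.map (· + 1), ?_, ?_⟩
      · rw [List.map_append, List.sum_append, hsum2, ← hs]
        rcases Nat.mod_two_eq_zero_or_one d with h2 | h2 <;> simp [h2] <;> omega
      · rw [List.length_append, List.length_map, hl, hw_split d]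
        rcases Nat.mod_two_eq_zero_or_one d with h2 | h2 <;> simp [h2] <;> omega

private lemma hw_compl : ∀ n d : ℕ, d ≤ 2 ^ n - 1 → hw d + hw (2 ^ n - 1 - d) = n := by
  intro n
  induction n with
  | zero => intro d hd; interval_cases d <;> simp [hw]
  | succ n ih =>
    intro d hd
    have hpow : 1 ≤ 2 ^ n := Nat.one_le_two_pow
    have hb : d % 2 < 2 := by omega
    have hq : d / 2 ≤ 2 ^ n - 1 := by omega
    have hc : 2 ^ (n + 1) - 1 - d = 2 * (2 ^ n - 1 - d / 2) + (1 - d % 2) := by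
      rw [pow_succ]; omega
    rw [hw_split d, hc, hw_two_mul_add _ _ (by omega)]
    have := ih (d / 2) hq
    omega

/-! ### Power functions composed with linear maps -/

section Field2
variable {V : Type*} [AddCommGroup V] {W : Type*} [Field W] [CharP W 2]

private lemma linearF2_map_zero {φ : V → W} (hφ : IsLinearF2 φ) : φ 0 = 0 := by
  have h := hφ 0 0
  rw [add_zero] at h
  linear_combination -h

private lemma pow_list_sum (x : W) (L : List ℕ) :
    x ^ (L.map (2 ^ ·)).sum = (L.map (fun e => x ^ 2 ^ e)).prod := by
  induction L with
  | nil => simp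
  | cons e L ih => simp [pow_add, ih]

private lemma frob_linear {φ : V → W} (hφ : IsLinearF2 φ) (e : ℕ) :
    IsLinearF2 (fun y => (φ y) ^ 2 ^ e) := by
  intro x y
  simp only [hφ x y]
  exact add_pow_char_pow (φ x) (φ y) 2 e

/-- A power function of weight `hw c` composed with an `F₂`-linear map has degree at most
`hw c`. -/
private lemma degLE_comp_pow (φ : V → W) (hφ : IsLinearF2 φ) (c : ℕ) :
    DegLE (fun x => (φ x) ^ c) (hw c) := by
  obtain ⟨L, hsum, hlen⟩ := hw_exists_list c
  have hfun : (fun x => (φ x) ^ c)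
      = fun x => ((L.map (fun e => fun y => (φ y) ^ 2 ^ e)).map (fun f0 => f0 x)).prod := by
    funext x
    rw [hsum, pow_list_sum, List.map_map]
    rfl
  rw [hfun, ← hlen]
  have : L.length = (L.map (fun e => fun y => (φ y) ^ 2 ^ e)).length := by simp
  rw [this]
  apply degLE_prod
  intro f0 hf0
  simp only [List.mem_map] at hf0
  obtain ⟨e, _, rfl⟩ := hf0
  exact frob_linear hφ e

end Field2

/-! ### The top cube sum does not vanish -/

private lemma cubeSum_top (n k : ℕ) (hkn : k < n)
    (φ : (Fin (n - k) → ZMod 2) → GaloisField 2 n)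
    (hφ : IsLinearF2 φ) (hinj : Function.Injective φ) :
    cubeSum ((fun x : GaloisField 2 n => x ^ (2 ^ n - 1)) ∘ φ) (n - k) 0
      (fun i j => if i = j then 1 else 0) ≠ 0 := by
  have hm1 : 1 ≤ n - k := by omega
  haveI : Fintype (GaloisField 2 n) := Fintype.ofFinite _
  have hcard : Fintype.card (GaloisField 2 n) = 2 ^ n := by
    rw [← Nat.card_eq_fintype_card]; exact GaloisField.card 2 n (by omega)
  have hval : ∀ S : Finset (Fin (n - k)),
      ((fun x : GaloisField 2 n => x ^ (2 ^ n - 1)) ∘ φ)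
          (0 + ∑ i ∈ S, (fun j => if i = j then (1 : ZMod 2) else 0))
        = if S = ∅ then 0 else 1 := by
    intro S
    rw [zero_add]
    by_cases hS : S = ∅
    · subst hS
      rw [Finset.sum_empty, if_pos rfl]
      show (φ 0) ^ (2 ^ n - 1) = 0
      rw [linearF2_map_zero hφ]
      exact zero_pow (by have h12 : 1 < 2 ^ n := Nat.one_lt_pow (by omega) (by norm_num); omega)
    · rw [if_neg hS]
      have hSne : (∑ i ∈ S, (fun j => if i = j then (1 : ZMod 2) else 0)) ≠ 0 := by
        intro h0
        obtain ⟨j, hj⟩ := Finset.nonempty_iff_ne_empty.2 hS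
        have hcf := congrFun h0 j
        rw [Finset.sum_apply] at hcf
        rw [Finset.sum_ite_eq' S j (fun _ => (1 : ZMod 2))] at hcf
        rw [if_pos hj] at hcf
        exact one_ne_zero hcf
      have hφne : φ (∑ i ∈ S, (fun j => if i = j then (1 : ZMod 2) else 0)) ≠ 0 := by
        intro h0
        exact hSne (hinj (by rw [h0, linearF2_map_zero hφ]))
      show (φ _) ^ (2 ^ n - 1) = 1
      rw [← hcard]
      exact FiniteField.pow_card_sub_one_eq_one _ hφne
  unfold cubeSum
  rw [Fintype.sum_congr _ _ hval]
  have hsum : (∑ S : Finset (Fin (n - k)), if S = ∅ then (0 : GaloisField 2 n) else 1)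
      = ∑ S : Finset (Fin (n - k)), ((1 : GaloisField 2 n)
          - if S = ∅ then (1 : GaloisField 2 n) else 0) := by
    apply Finset.sum_congr rfl
    intro S _
    by_cases hS : S = ∅ <;> simp [hS]
  rw [hsum, Finset.sum_sub_distrib, Finset.sum_const, Finset.card_univ, Fintype.card_finset,
    Fintype.card_fin, Finset.sum_ite_eq' Finset.univ (∅ : Finset (Fin (n - k)))
      (fun _ => (1 : GaloisField 2 n)), if_pos (Finset.mem_univ _)]
  have h2 : ((2 ^ (n - k)) • (1 : GaloisField 2 n)) = 0 := by
    rw [nsmul_eq_mul, mul_one]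
    push_cast
    rw [show ((2 : GaloisField 2 n)) = 0 from CharTwo.two_eq_zero]
    exact zero_pow (by omega)
  rw [h2, zero_sub]
  exact neg_ne_zero.mpr one_ne_zero

/-- Let `F(x) = x^d` be a power function on `F_{2^n}` with `1 ≤ d ≤ 2^n - 1`, of
algebraic degree `r = w_H(d) < n`. For every `F_2`-linear subspace `A` of `F_{2^n}` of
codimension `k` (given via an injective linear parametrization
`φ : F_2^{n-k} → F_{2^n}`) with `1 ≤ k ≤ r`, we have `deg(F|_A) ≥ r - k`. -/
theorem stmt9 (n d k r : ℕ) (hd1 : 1 ≤ d) (hd2 : d ≤ 2 ^ n - 1)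
    (hr : hw d = r) (hrn : r < n) (hk1 : 1 ≤ k) (hkr : k ≤ r)
    (φ : (Fin (n - k) → ZMod 2) → GaloisField 2 n)
    (hφ : IsLinearF2 φ) (hinj : Function.Injective φ) :
    ((r - k : ℕ) : WithBot ℕ) ≤ adeg ((fun x : GaloisField 2 n => x ^ d) ∘ φ) := by
  have hpow : 1 ≤ 2 ^ n := Nat.one_le_two_pow
  set F : (Fin (n - k) → ZMod 2) → GaloisField 2 n
    := (fun x : GaloisField 2 n => x ^ d) ∘ φ with hF
  set G : (Fin (n - k) → ZMod 2) → GaloisField 2 n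
    := fun x => (φ x) ^ (2 ^ n - 1 - d) with hG
  have hFeq : F = fun x => (φ x) ^ d := rfl
  have H1 : DegLE F r := by rw [hFeq, ← hr]; exact degLE_comp_pow φ hφ d
  have H2 : DegLE G (n - r) := by
    have hdeg := degLE_comp_pow φ hφ (2 ^ n - 1 - d)
    have hwc : hw (2 ^ n - 1 - d) = n - r := by
      have := hw_compl n d hd2
      omega
    rwa [hwc] at hdeg
  have hFG : (fun x => F x * G x)
      = (fun x : GaloisField 2 n => x ^ (2 ^ n - 1)) ∘ φ := by
    funext x
    show (φ x) ^ d * (φ x) ^ (2 ^ n - 1 - d) = (φ x) ^ (2 ^ n - 1)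
    rw [← pow_add]
    congr 1
    omega
  have Hnonzero := cubeSum_top n k (by omega) φ hφ hinj
  rw [← hFG] at Hnonzero
  by_contra hC
  have Hvan : ∀ K, r - k ≤ K → ∀ a v, cubeSum F K a v = 0 := by
    intro K hK a v
    by_contra hne
    apply hC
    have hmem : K ∈ {k0 : ℕ | ∃ a v, cubeSum F k0 a v ≠ 0} := ⟨a, v, hne⟩
    have hbdd : BddAbove {k0 : ℕ | ∃ a v, cubeSum F k0 a v ≠ 0} := by
      refine ⟨r, fun K' hK' => ?_⟩
      by_contra hgt
      push_neg at hgt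
      obtain ⟨a', v', hne'⟩ := hK'
      exact hne' (H1 K' hgt a' v')
    have hex : ∃ k0 : ℕ, ∃ a v, cubeSum F k0 a v ≠ 0 := ⟨K, a, v, hne⟩
    show ((r - k : ℕ) : WithBot ℕ) ≤ adeg F
    unfold adeg
    rw [dif_pos hex]
    have hle : r - k ≤ sSup {k0 : ℕ | ∃ a v, cubeSum F k0 a v ≠ 0} :=
      le_trans hK (le_csSup hbdd hmem)
    exact_mod_cast hle
  rcases Nat.lt_or_ge k r with hkr2 | hkr2
  · have hF' : DegLE F (r - k - 1) := fun K hK a v => Hvan K (by omega) a v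
    have hprod := degLE_mul hF' H2
    have heq : (r - k - 1) + (n - r) = n - k - 1 := by omega
    rw [heq] at hprod
    exact Hnonzero (hprod (n - k) (by omega) 0 _)
  · have hF0 : DegLE F 0 := fun K hK a v => Hvan K (by omega) a v
    have hzero : ∀ x, F x = 0 := by
      intro x
      rw [const_of_degLE_zero hF0 x]
      show (φ 0) ^ d = 0
      rw [linearF2_map_zero hφ]
      exact zero_pow (by omega)
    have hzf : (fun x => F x * G x) = fun _ => (0 : GaloisField 2 n) := by
      funext x; rw [hzero x, zero_mul]
    rw [hzf] at Hnonzero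
    apply Hnonzero
    simp [cubeSum]
end

section
/- Let F(x) = x^d on F_{2^n} with d = 1 + 2^u + 2^{2u} + ... + 2^{(j-1)u}, where gcd(u, n) = 1 and 1 < j < n. Then deg(F) = j and the restriction of F to every affine subspace of F_{2^n} of dimension j has algebraic degree exactly j (i.e., F has full degree-stability under restrictions to affine spaces). -/
open Classical

/-! ### Auxiliary material -/

namespace Aux13

open Finset

/-! #### Generic facts about `adeg` -/

theorem adeg_eq {V W : Type*} [AddCommGroup V] [AddCommGroup W] (f : V → W) (j : ℕ)
    (h1 : ∃ a v, cubeSum f j a v ≠ 0)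
    (h2 : ∀ k, j < k → ∀ a v, cubeSum f k a v = 0) :
    adeg f = (j : WithBot ℕ) := by
  have hex : ∃ k : ℕ, ∃ a v, cubeSum f k a v ≠ 0 := ⟨j, h1⟩
  rw [adeg, dif_pos hex]
  congr 1
  refine IsGreatest.csSup_eq ⟨h1, ?_⟩
  rintro k ⟨a, v, hav⟩
  by_contra hk
  exact hav (h2 k (by omega) a v)

/-! #### Subset sums in characteristic two -/

theorem sum_symmDiff_eq {F : Type*} [AddCommGroup F] (h2 : ∀ x : F, x + x = 0)
    {ι : Type*} [DecidableEq ι] (w : ι → F) (S T : Finset ι) (h : ∑ i ∈ S, w i = ∑ i ∈ T, w i) :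
    ∑ i ∈ symmDiff S T, w i = 0 := by
  have hS : ∑ i ∈ S \ T, w i + ∑ i ∈ S ∩ T, w i = ∑ i ∈ S, w i := by
    rw [← Finset.sdiff_inter_self_left S T]
    exact Finset.sum_sdiff Finset.inter_subset_left
  have hT : ∑ i ∈ T \ S, w i + ∑ i ∈ S ∩ T, w i = ∑ i ∈ T, w i := by
    rw [Finset.inter_comm, ← Finset.sdiff_inter_self_left T S]
    exact Finset.sum_sdiff Finset.inter_subset_left
  have hdiff : ∑ i ∈ S \ T, w i = ∑ i ∈ T \ S, w i := by
    have := hS.trans (h.trans hT.symm)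
    exact add_right_cancel this
  have hdisj : Disjoint (S \ T) (T \ S) := disjoint_sdiff_sdiff
  have hsd : symmDiff S T = (S \ T) ∪ (T \ S) := symmDiff_def S T
  rw [hsd, Finset.sum_union hdisj, hdiff]
  exact h2 _

theorem subsetSum_injective {F : Type*} [AddCommGroup F] (h2 : ∀ x : F, x + x = 0)
    {ι : Type*} [DecidableEq ι] (w : ι → F)
    (hw : ∀ T : Finset ι, T.Nonempty → ∑ i ∈ T, w i ≠ 0) :
    Function.Injective (fun S : Finset ι => ∑ i ∈ S, w i) := by
  intro S T h
  by_contra hne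
  have hsd : (symmDiff S T).Nonempty := by
    rw [Finset.nonempty_iff_ne_empty]
    intro he
    exact hne (Finset.symmDiff_eq_empty.mp he)
  exact hw _ hsd (sum_symmDiff_eq h2 w S T h)

/-! #### Counting supersets -/

theorem card_supersets {k : ℕ} (T : Finset (Fin k)) :
    (Finset.univ.filter fun S : Finset (Fin k) => T ⊆ S).card = 2 ^ (k - T.card) := by
  have : (Finset.univ.filter fun S : Finset (Fin k) => T ⊆ S).card = Tᶜ.powerset.card := by
    refine Finset.card_bij' (fun S _ => S \ T) (fun S0 _ => S0 ∪ T) ?_ ?_ ?_ ?_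
    · intro S hS
      rw [Finset.mem_powerset]
      intro x hx
      rw [Finset.mem_sdiff] at hx
      simpa using hx.2
    · intro S0 hS0
      simp only [Finset.mem_filter, Finset.mem_univ, true_and]
      exact Finset.subset_union_right
    · intro S hS
      rw [Finset.mem_filter] at hS
      show S \ T ∪ T = S
      exact Finset.sdiff_union_of_subset hS.2
    · intro S0 hS0
      rw [Finset.mem_powerset] at hS0
      show (S0 ∪ T) \ T = S0
      refine Finset.union_sdiff_cancel_right ?_
      exact Finset.disjoint_left.mpr fun a ha => by
        have := hS0 ha; rw [Finset.mem_compl] at this; exact this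
  rw [this, Finset.card_powerset, Finset.card_compl, Fintype.card_fin]

theorem card_eraseNone_le {α : Type*} [DecidableEq α] (s : Finset (Option α)) :
    (Finset.eraseNone s).card ≤ (s.erase none).card := by
  refine Finset.card_le_card_of_injOn some ?_ ?_
  · intro a ha
    rw [Finset.mem_coe, Finset.mem_eraseNone] at ha
    exact Finset.mem_erase.mpr ⟨by simp, ha⟩
  · intro a _ b _ h
    exact Option.some_injective _ h

end Aux13

section Expand

open Finset

variable {F : Type*} [Field F] [CharP F 2]

/-- Image of `g` among `some`s. -/
noncomputable def Tg {j k : ℕ} (g : Fin j → Option (Fin k)) : Finset (Fin k) :=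
  Finset.univ.filter fun s : Fin k => ∃ i, g i = some s

theorem Tg_eq {j k : ℕ} (g : Fin j → Option (Fin k)) :
    Tg g = Finset.eraseNone (Finset.image g Finset.univ) := by
  ext s
  simp [Tg, Finset.mem_eraseNone, eq_comm]

theorem Tg_card_le {j k : ℕ} (g : Fin j → Option (Fin k)) : (Tg g).card ≤ j := by
  rw [Tg_eq]
  calc (Finset.eraseNone (Finset.image g Finset.univ)).card
      ≤ ((Finset.image g Finset.univ).erase none).card := Aux13.card_eraseNone_le _
    _ ≤ (Finset.image g Finset.univ).card := Finset.card_erase_le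
    _ ≤ (Finset.univ : Finset (Fin j)).card := Finset.card_image_le
    _ = j := by simp

theorem Tg_card_lt {j k : ℕ} (g : Fin j → Option (Fin k)) (i0 : Fin j) (h0 : g i0 = none) :
    (Tg g).card < j := by
  have hnone : none ∈ Finset.image g Finset.univ :=
    Finset.mem_image.mpr ⟨i0, Finset.mem_univ _, h0⟩
  have h1 : 1 ≤ (Finset.image g Finset.univ).card := Finset.card_pos.mpr ⟨none, hnone⟩
  have hcard : ((Finset.image g Finset.univ).erase none).card
      = (Finset.image g Finset.univ).card - 1 := Finset.card_erase_of_mem hnone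
  have hle : (Tg g).card ≤ (Finset.image g Finset.univ).card - 1 := by
    rw [Tg_eq, ← hcard]; exact Aux13.card_eraseNone_le _
  have him : (Finset.image g Finset.univ).card ≤ j := le_trans Finset.card_image_le (by simp)
  omega

theorem cube_expand (j u k : ℕ) (a : F) (v : Fin k → F) :
    cubeSum (fun x : F => x ^ (∑ i ∈ Finset.range j, 2 ^ (i * u))) k a v
      = ∑ g ∈ Finset.univ.filter (fun g : Fin j → Option (Fin k) => Tg g = Finset.univ),
          ∏ i : Fin j, ((g i).elim a v) ^ 2 ^ ((i : ℕ) * u) := by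
  -- Step 1: power to product, and Frobenius-linearize
  have step1 : ∀ S : Finset (Fin k),
      (a + ∑ s ∈ S, v s) ^ (∑ i ∈ Finset.range j, 2 ^ (i * u))
        = ∏ i : Fin j, ∑ t ∈ Finset.insertNone S, ((t.elim a v) ^ 2 ^ ((i : ℕ) * u)) := by
    intro S
    rw [← Finset.prod_pow_eq_pow_sum, ← Fin.prod_univ_eq_prod_range
      (fun i => (a + ∑ s ∈ S, v s) ^ 2 ^ (i * u)) j]
    refine Finset.prod_congr rfl fun i _ => ?_
    rw [Finset.sum_insertNone]
    simp only [Option.elim]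
    rw [show (a + ∑ s ∈ S, v s) ^ 2 ^ ((i:ℕ) * u)
        = a ^ 2 ^ ((i:ℕ) * u) + (∑ s ∈ S, v s) ^ 2 ^ ((i:ℕ) * u) from
      add_pow_char_pow a _ 2 _]
    congr 1
    exact map_sum (iterateFrobenius F 2 ((i:ℕ) * u)) v S
  unfold cubeSum
  calc
    ∑ S : Finset (Fin k), (a + ∑ s ∈ S, v s) ^ (∑ i ∈ Finset.range j, 2 ^ (i * u))
        = ∑ S : Finset (Fin k), ∏ i : Fin j,
            ∑ t ∈ Finset.insertNone S, ((t.elim a v) ^ 2 ^ ((i : ℕ) * u)) := by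
          exact Finset.sum_congr rfl fun S _ => step1 S
    _ = ∑ S : Finset (Fin k), ∑ g ∈ Fintype.piFinset (fun _ : Fin j => Finset.insertNone S),
            ∏ i : Fin j, ((g i).elim a v) ^ 2 ^ ((i : ℕ) * u) := by
          exact Finset.sum_congr rfl fun S _ => Finset.prod_univ_sum _ _
    _ = ∑ S : Finset (Fin k), ∑ g : Fin j → Option (Fin k),
            if Tg g ⊆ S then ∏ i : Fin j, ((g i).elim a v) ^ 2 ^ ((i : ℕ) * u) else 0 := by
          refine Finset.sum_congr rfl fun S _ => ?_
          rw [← Finset.sum_filter]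
          refine (Finset.sum_congr ?_ fun g _ => rfl)
          ext g
          simp only [Fintype.mem_piFinset, Finset.mem_filter, Finset.mem_univ, true_and,
            Finset.mem_insertNone]
          constructor
          · intro h s hs
            rcases Finset.mem_filter.mp hs with ⟨-, i, hi⟩
            have := h i
            rw [hi] at this
            exact this s rfl
          · intro h i
            intro b hb
            refine h ?_
            refine Finset.mem_filter.mpr ⟨Finset.mem_univ _, ⟨i, ?_⟩⟩
            cases hgi : g i with
            | none => rw [hgi] at hb; cases hb
            | some c => rw [hgi] at hb; cases hb; rfl
    _ = ∑ g : Fin j → Option (Fin k), ∑ S : Finset (Fin k),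
            if Tg g ⊆ S then ∏ i : Fin j, ((g i).elim a v) ^ 2 ^ ((i : ℕ) * u) else 0 :=
          Finset.sum_comm
    _ = ∑ g : Fin j → Option (Fin k),
          (((2 ^ (k - (Tg g).card) : ℕ) : F)) * ∏ i : Fin j, ((g i).elim a v) ^ 2 ^ ((i : ℕ) * u) := by
          refine Finset.sum_congr rfl fun g _ => ?_
          rw [← Finset.sum_filter, Finset.sum_const, ← Aux13.card_supersets (Tg g), nsmul_eq_mul]
    _ = ∑ g : Fin j → Option (Fin k),
          if Tg g = Finset.univ then ∏ i : Fin j, ((g i).elim a v) ^ 2 ^ ((i : ℕ) * u) else 0 := by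
          refine Finset.sum_congr rfl fun g _ => ?_
          by_cases h : Tg g = Finset.univ
          · rw [if_pos h, h]
            simp [Finset.card_univ]
          · rw [if_neg h]
            have hlt : (Tg g).card < k := by
              have hle : (Tg g).card ≤ k := by
                simpa using Finset.card_le_card (Finset.subset_univ (Tg g))
              refine lt_of_le_of_ne hle fun hc => h ?_
              exact (Finset.card_eq_iff_eq_univ _).mp (by rw [hc, Fintype.card_fin])
            have : ((2 ^ (k - (Tg g).card) : ℕ) : F) = 0 := by
              push_cast
              rw [show ((2:F) = 0) from CharTwo.two_eq_zero]
              exact zero_pow (by omega)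
            rw [this, zero_mul]
    _ = ∑ g ∈ Finset.univ.filter (fun g : Fin j → Option (Fin k) => Tg g = Finset.univ),
          ∏ i : Fin j, ((g i).elim a v) ^ 2 ^ ((i : ℕ) * u) := by
          rw [Finset.sum_filter]


theorem cube_high (j u k : ℕ) (hk : j < k) (a : F) (v : Fin k → F) :
    cubeSum (fun x : F => x ^ (∑ i ∈ Finset.range j, 2 ^ (i * u))) k a v = 0 := by
  rw [cube_expand]
  refine Finset.sum_eq_zero fun g hg => ?_
  exfalso
  rcases Finset.mem_filter.mp hg with ⟨-, hTg⟩
  have h1 : (Tg g).card ≤ j := Tg_card_le g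
  have h2 : (Tg g).card = k := by rw [hTg, Finset.card_univ, Fintype.card_fin]
  omega

theorem cube_perm (j u : ℕ) (a : F) (v : Fin j → F) :
    cubeSum (fun x : F => x ^ (∑ i ∈ Finset.range j, 2 ^ (i * u))) j a v
      = ∑ π : Equiv.Perm (Fin j), ∏ i : Fin j, (v (π i)) ^ 2 ^ ((i : ℕ) * u) := by
  rw [cube_expand]
  symm
  refine Finset.sum_bij (fun (π : Equiv.Perm (Fin j)) _ => (fun i => (some (π i) : Option (Fin j)))) ?_ ?_ ?_ ?_
  · -- maps into filter
    intro π _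
    refine Finset.mem_filter.mpr ⟨Finset.mem_univ _, ?_⟩
    refine Finset.eq_univ_iff_forall.mpr fun s => ?_
    exact Finset.mem_filter.mpr ⟨Finset.mem_univ _, ⟨π.symm s, by simp⟩⟩
  · -- injective
    intro π₁ _ π₂ _ h
    exact Equiv.ext fun i => Option.some_injective _ (congrFun h i)
  · -- surjective
    intro g hg
    rcases Finset.mem_filter.mp hg with ⟨-, hTg⟩
    -- every coordinate of g is some
    have hsome : ∀ i, g i ≠ none := by
      intro i0 h0
      have := Tg_card_lt g i0 h0
      rw [hTg, Finset.card_univ, Fintype.card_fin] at this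
      omega
    have hex : ∀ i : Fin j, ∃ s, g i = some s := fun i => by
      cases hgi : g i with
      | none => exact absurd hgi (hsome i)
      | some s => exact ⟨s, rfl⟩
    choose f hf using hex
    have hsurj : Function.Surjective f := by
      intro s
      have hs : s ∈ Tg g := hTg ▸ Finset.mem_univ s
      rcases Finset.mem_filter.mp hs with ⟨-, i, hi⟩
      exact ⟨i, by rw [hf i] at hi; exact Option.some_injective _ hi⟩
    have hbij : Function.Bijective f :=
      ⟨Finite.injective_iff_surjective.mpr hsurj, hsurj⟩
    refine ⟨Equiv.ofBijective f hbij, Finset.mem_univ _, ?_⟩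
    funext i
    exact (hf i).symm
  · -- terms agree
    intro π _
    rfl

end Expand

section KerMoore

open Finset

variable {F : Type*} [Field F] [CharP F 2] [Fintype F]

theorem ker_card_le (u : ℕ) (hfix : ∀ x : F, x ^ 2 ^ u = x → x = 0 ∨ x = 1) :
    ∀ (m : ℕ) (c : ℕ → F), (∃ i, i ≤ m ∧ c i ≠ 0) →
    (Finset.univ.filter fun x : F =>
        ∑ i ∈ Finset.range (m + 1), c i * x ^ 2 ^ (i * u) = 0).card ≤ 2 ^ m := by
  intro m
  induction m with
  | zero =>
    intro c hc
    obtain ⟨i, hi, hci⟩ := hc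
    interval_cases i
    refine le_trans (Finset.card_le_card ?_) (le_of_eq (Finset.card_singleton (0 : F)))
    intro x hx
    rcases Finset.mem_filter.mp hx with ⟨-, hx⟩
    rw [Finset.sum_range_one] at hx
    simp only [Nat.zero_mul, pow_zero, pow_one] at hx
    rcases mul_eq_zero.mp hx with h | h
    · exact absurd h hci
    · simpa using h
  | succ m IH =>
    intro c hc
    by_cases hctop : c (m + 1) = 0
    · -- top coefficient vanishes: reduce to level m
      have heq : (Finset.univ.filter fun x : F =>
          ∑ i ∈ Finset.range (m + 2), c i * x ^ 2 ^ (i * u) = 0)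
          = (Finset.univ.filter fun x : F =>
          ∑ i ∈ Finset.range (m + 1), c i * x ^ 2 ^ (i * u) = 0) := by
        refine Finset.filter_congr fun x _ => ?_
        rw [Finset.sum_range_succ, hctop, zero_mul, add_zero]
      rw [heq]
      obtain ⟨i, hi, hci⟩ := hc
      have hi' : i ≤ m := by
        rcases Nat.lt_or_ge i (m + 1) with h | h
        · omega
        · exfalso; have : i = m + 1 := by omega
          rw [this] at hci; exact hci hctop
      exact le_trans (IH c ⟨i, hi', hci⟩) (Nat.pow_le_pow_right (by norm_num) (by omega))
    · by_cases hW : ∃ w : F, w ≠ 0 ∧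
          ∑ i ∈ Finset.range (m + 2), c i * w ^ 2 ^ (i * u) = 0
      · obtain ⟨w, hw0, hwP⟩ := hW
        set c' : ℕ → F := fun i => c i * w ^ 2 ^ (i * u) with hc'
        set dd : ℕ → F := fun i => ∑ t ∈ Finset.range (i + 1), c' t with hdd
        have hQ1 : ∑ i ∈ Finset.range (m + 2), c' i = 0 := by
          simpa [hc'] using hwP
        have hddm1 : dd (m + 1) = 0 := hQ1
        have hddm : dd m ≠ 0 := by
          intro h0
          have : dd (m + 1) = dd m + c' (m + 1) := Finset.sum_range_succ c' (m + 1)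
          rw [hddm1, h0, zero_add] at this
          have : c' (m + 1) = 0 := this.symm
          rw [hc'] at this
          exact hctop (by
            rcases mul_eq_zero.mp this with h | h
            · exact h
            · exact absurd h (pow_ne_zero _ hw0))
        -- key identity
        have key : ∀ x : F,
            ∑ i ∈ Finset.range (m + 2), c' i * x ^ 2 ^ (i * u)
              = ∑ i ∈ Finset.range (m + 1), dd i * (x ^ 2 ^ u + x) ^ 2 ^ (i * u) := by
          intro x
          have hsplit : ∀ i : ℕ, (x ^ 2 ^ u + x) ^ 2 ^ (i * u)
              = x ^ 2 ^ ((i + 1) * u) + x ^ 2 ^ (i * u) := by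
            intro i
            rw [add_pow_char_pow]
            congr 1
            rw [← pow_mul, ← pow_add]
            congr 1
            ring
          have hc'succ : ∀ i : ℕ, c' (i + 1) = dd (i + 1) + dd i := by
            intro i
            have h1 : dd (i + 1) = dd i + c' (i + 1) := Finset.sum_range_succ c' (i + 1)
            have h2 : c' (i + 1) = dd (i + 1) - dd i := by rw [h1]; ring
            rw [h2, CharTwo.sub_eq_add]
          have hc'0 : c' 0 = dd 0 := by simp [hdd]
          calc
            ∑ i ∈ Finset.range (m + 2), c' i * x ^ 2 ^ (i * u)
                = ∑ i ∈ Finset.range (m + 1), c' (i + 1) * x ^ 2 ^ ((i + 1) * u)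
                    + c' 0 * x ^ 2 ^ (0 * u) :=
                  Finset.sum_range_succ' _ (m + 1)
            _ = (∑ i ∈ Finset.range (m + 1), dd (i + 1) * x ^ 2 ^ ((i + 1) * u)
                    + dd 0 * x ^ 2 ^ (0 * u))
                  + ∑ i ∈ Finset.range (m + 1), dd i * x ^ 2 ^ ((i + 1) * u) := by
                  rw [hc'0]
                  have : ∀ i ∈ Finset.range (m + 1),
                      c' (i + 1) * x ^ 2 ^ ((i + 1) * u)
                        = dd (i + 1) * x ^ 2 ^ ((i + 1) * u) + dd i * x ^ 2 ^ ((i + 1) * u) := by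
                    intro i _
                    rw [hc'succ i, add_mul]
                  rw [Finset.sum_congr rfl this, Finset.sum_add_distrib]
                  ring
            _ = ∑ i ∈ Finset.range (m + 2), dd i * x ^ 2 ^ (i * u)
                  + ∑ i ∈ Finset.range (m + 1), dd i * x ^ 2 ^ ((i + 1) * u) := by
                  rw [Finset.sum_range_succ' (fun i => dd i * x ^ 2 ^ (i * u)) (m + 1)]
            _ = ∑ i ∈ Finset.range (m + 1), dd i * x ^ 2 ^ (i * u)
                  + ∑ i ∈ Finset.range (m + 1), dd i * x ^ 2 ^ ((i + 1) * u) := by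
                  rw [Finset.sum_range_succ (fun i => dd i * x ^ 2 ^ (i * u)) (m + 1),
                    hddm1, zero_mul, add_zero]
            _ = ∑ i ∈ Finset.range (m + 1), dd i * (x ^ 2 ^ u + x) ^ 2 ^ (i * u) := by
                  rw [← Finset.sum_add_distrib]
                  refine Finset.sum_congr rfl fun i _ => ?_
                  rw [hsplit i, mul_add]
                  ring
        -- card of K equals card of K'
        set K := Finset.univ.filter fun x : F =>
            ∑ i ∈ Finset.range (m + 2), c i * x ^ 2 ^ (i * u) = 0 with hK
        set K' := Finset.univ.filter fun x : F =>
            ∑ i ∈ Finset.range (m + 2), c' i * x ^ 2 ^ (i * u) = 0 with hK'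
        have hPQ : ∀ x : F, ∑ i ∈ Finset.range (m + 2), c i * (w * x) ^ 2 ^ (i * u)
            = ∑ i ∈ Finset.range (m + 2), c' i * x ^ 2 ^ (i * u) := by
          intro x
          refine Finset.sum_congr rfl fun i _ => ?_
          rw [hc', mul_pow]
          ring
        have hcards : K'.card = K.card := by
          refine Finset.card_bij' (fun y _ => w * y) (fun x _ => w⁻¹ * x) ?_ ?_ ?_ ?_
          · intro y hy
            rcases Finset.mem_filter.mp hy with ⟨-, hy⟩
            refine Finset.mem_filter.mpr ⟨Finset.mem_univ _, ?_⟩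
            show ∑ i ∈ Finset.range (m + 2), c i * (w * y) ^ 2 ^ (i * u) = 0
            rw [hPQ y]
            exact hy
          · intro x hx
            rcases Finset.mem_filter.mp hx with ⟨-, hx⟩
            refine Finset.mem_filter.mpr ⟨Finset.mem_univ _, ?_⟩
            show ∑ i ∈ Finset.range (m + 2), c' i * (w⁻¹ * x) ^ 2 ^ (i * u) = 0
            rw [← hPQ (w⁻¹ * x)]
            have hco : w * (w⁻¹ * x) = x := by field_simp
            rw [hco]
            exact hx
          · intro y _
            show w⁻¹ * (w * y) = y
            field_simp
          · intro x _
            show w * (w⁻¹ * x) = x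
            field_simp
        -- bound card of K' via the map ψ
        set ψ : F → F := fun x => x ^ 2 ^ u + x with hψ
        set R := Finset.univ.filter fun y : F =>
            ∑ i ∈ Finset.range (m + 1), dd i * y ^ 2 ^ (i * u) = 0 with hR
        have himage : K'.image ψ ⊆ R := by
          intro y hy
          rcases Finset.mem_image.mp hy with ⟨x, hx, hxy⟩
          rcases Finset.mem_filter.mp hx with ⟨-, hx⟩
          refine Finset.mem_filter.mpr ⟨Finset.mem_univ _, ?_⟩
          rw [← hxy]
          rw [hψ]
          simp only []
          rw [← key x]
          exact hx
        have hfiber : ∀ b ∈ K'.image ψ, (K'.filter fun x => ψ x = b).card ≤ 2 := by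
          intro b hb
          rcases Finset.mem_image.mp hb with ⟨x₀, hx₀K, hx₀⟩
          have hsub : (K'.filter fun x => ψ x = b) ⊆ {x₀, x₀ + 1} := by
            intro x hx
            rcases Finset.mem_filter.mp hx with ⟨-, hxb⟩
            have hdiff : (x + x₀) ^ 2 ^ u = x + x₀ := by
              have h1 : x ^ 2 ^ u = b + x := by
                have : x ^ 2 ^ u + x = b := hxb
                have := congrArg (· + x) this
                simpa [add_assoc, CharTwo.add_self_eq_zero] using this
              have h2 : x₀ ^ 2 ^ u = b + x₀ := by
                have : x₀ ^ 2 ^ u + x₀ = b := hx₀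
                have := congrArg (· + x₀) this
                simpa [add_assoc, CharTwo.add_self_eq_zero] using this
              rw [add_pow_char_pow, h1, h2]
              have : b + x + (b + x₀) = (b + b) + (x + x₀) := by ring
              rw [this, CharTwo.add_self_eq_zero, zero_add]
            rcases hfix _ hdiff with h | h
            · have : x = x₀ := by
                have := congrArg (· + x₀) h
                simpa [add_assoc, CharTwo.add_self_eq_zero] using this
              simp [this]
            · have : x = x₀ + 1 := by
                have := congrArg (· + x₀) h
                have h2 : x + (x₀ + x₀) = 1 + x₀ := by
                  simpa [add_assoc] using this
                rw [CharTwo.add_self_eq_zero, add_zero] at h2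
                rw [h2]; ring
              simp [this]
          refine le_trans (Finset.card_le_card hsub) ?_
          exact le_trans (Finset.card_insert_le _ _) (by simp)
        have hKR : K'.card ≤ 2 * R.card := by
          refine le_trans (Finset.card_le_mul_card_image K' 2 hfiber) ?_
          exact Nat.mul_le_mul_left 2 (Finset.card_le_card himage)
        have hRcard : R.card ≤ 2 ^ m := IH dd ⟨m, le_refl m, hddm⟩
        calc K.card = K'.card := hcards.symm
          _ ≤ 2 * R.card := hKR
          _ ≤ 2 * 2 ^ m := by omega
          _ = 2 ^ (m + 1) := by ring
      · -- no nonzero root: kernel inside {0}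
        push_neg at hW
        refine le_trans (Finset.card_le_card ?_) (le_trans
          (le_of_eq (Finset.card_singleton (0 : F))) Nat.one_le_two_pow)
        intro x hx
        rcases Finset.mem_filter.mp hx with ⟨-, hx⟩
        by_contra hx0
        have hx0' : x ≠ 0 := by simpa using hx0
        exact (hW x hx0') hx

theorem moore_ne_zero (u j : ℕ) (hj : 1 ≤ j)
    (hfix : ∀ x : F, x ^ 2 ^ u = x → x = 0 ∨ x = 1)
    (w : Fin j → F) (hw : ∀ T : Finset (Fin j), T.Nonempty → ∑ i ∈ T, w i ≠ 0) :
    ∑ π : Equiv.Perm (Fin j), ∏ i : Fin j, (w (π i)) ^ 2 ^ ((i : ℕ) * u) ≠ 0 := by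
  set M : Matrix (Fin j) (Fin j) F := Matrix.of fun i k => (w k) ^ 2 ^ ((i : ℕ) * u) with hM
  have hsign : ∀ (σ : Equiv.Perm (Fin j)) (x : F), Equiv.Perm.sign σ • x = x := by
    intro σ x
    rcases Int.units_eq_one_or (Equiv.Perm.sign σ) with h | h <;>
      rw [h] <;> simp [Units.smul_def, CharTwo.neg_eq]
  have hdet : ∑ π : Equiv.Perm (Fin j), ∏ i : Fin j, (w (π i)) ^ 2 ^ ((i : ℕ) * u) = M.det := by
    rw [Matrix.det_apply]
    rw [Finset.sum_congr rfl fun σ _ => hsign σ _]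
    refine Fintype.sum_equiv (Equiv.inv (Equiv.Perm (Fin j))) _ _ fun π => ?_
    have : ∀ i : Fin j, (w (π i)) ^ 2 ^ ((i : ℕ) * u) = M i (π i) := fun i => rfl
    rw [Finset.prod_congr rfl fun i _ => this i]
    calc ∏ i : Fin j, M i (π i)
        = ∏ i : Fin j, M (π⁻¹ (π i)) (π i) := by
          refine Finset.prod_congr rfl fun i _ => ?_
          rw [Equiv.Perm.inv_def, Equiv.symm_apply_apply]
      _ = ∏ i : Fin j, M (π⁻¹ i) i := Equiv.prod_comp π (fun i => M (π⁻¹ i) i)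
      _ = ∏ i : Fin j, M ((Equiv.inv (Equiv.Perm (Fin j)) π) i) i := rfl
  rw [hdet]
  intro hdet0
  obtain ⟨cvec, hc0, hmul⟩ := Matrix.exists_vecMul_eq_zero_iff.mpr hdet0
  have hk : ∀ k : Fin j, ∑ i : Fin j, cvec i * (w k) ^ 2 ^ ((i : ℕ) * u) = 0 := by
    intro k
    have := congrFun hmul k
    simpa [Matrix.vecMul, dotProduct, hM] using this
  set cc : ℕ → F := fun i => if h : i < j then cvec ⟨i, h⟩ else 0 with hcc
  have hPfin : ∀ x : F, ∑ i ∈ Finset.range j, cc i * x ^ 2 ^ (i * u)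
      = ∑ i : Fin j, cvec i * x ^ 2 ^ ((i : ℕ) * u) := by
    intro x
    rw [← Fin.sum_univ_eq_sum_range (fun i => cc i * x ^ 2 ^ (i * u)) j]
    refine Finset.sum_congr rfl fun i _ => ?_
    rw [hcc]
    simp only [i.isLt, dif_pos, Fin.eta]
  have hwk : ∀ k : Fin j, ∑ i ∈ Finset.range j, cc i * (w k) ^ 2 ^ (i * u) = 0 := fun k => by
    rw [hPfin]; exact hk k
  -- P is additive
  have hPadd : ∀ x y : F, ∑ i ∈ Finset.range j, cc i * (x + y) ^ 2 ^ (i * u)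
      = (∑ i ∈ Finset.range j, cc i * x ^ 2 ^ (i * u))
        + ∑ i ∈ Finset.range j, cc i * y ^ 2 ^ (i * u) := by
    intro x y
    rw [← Finset.sum_add_distrib]
    refine Finset.sum_congr rfl fun i _ => ?_
    rw [add_pow_char_pow, mul_add]
  set Phom : F →+ F := AddMonoidHom.mk'
    (fun x => ∑ i ∈ Finset.range j, cc i * x ^ 2 ^ (i * u)) hPadd with hPhom
  have hall : ∀ T : Finset (Fin j), Phom (∑ i ∈ T, w i) = 0 := by
    intro T
    rw [map_sum]
    exact Finset.sum_eq_zero fun i _ => hwk i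
  set K := Finset.univ.filter fun x : F =>
      ∑ i ∈ Finset.range j, cc i * x ^ 2 ^ (i * u) = 0 with hK
  have hinj : Function.Injective (fun S : Finset (Fin j) => ∑ i ∈ S, w i) :=
    Aux13.subsetSum_injective CharTwo.add_self_eq_zero w hw
  have hcard1 : 2 ^ j ≤ K.card := by
    have hmaps : ∀ S : Finset (Fin j), (∑ i ∈ S, w i) ∈ K := by
      intro S
      refine Finset.mem_filter.mpr ⟨Finset.mem_univ _, ?_⟩
      exact hall S
    have hle := Finset.card_le_card_of_injOn
      (s := (Finset.univ : Finset (Finset (Fin j)))) (t := K)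
      (fun S : Finset (Fin j) => ∑ i ∈ S, w i) (fun S _ => hmaps S) hinj.injOn
    calc 2 ^ j = (Finset.univ : Finset (Finset (Fin j))).card := by
          simp [Fintype.card_finset]
      _ ≤ K.card := hle
  have hex : ∃ i, i ≤ j - 1 ∧ cc i ≠ 0 := by
    obtain ⟨kk, hkk⟩ := Function.ne_iff.mp hc0
    refine ⟨(kk : ℕ), by omega, ?_⟩
    rw [hcc]
    simp only [kk.isLt, dif_pos, Fin.eta]
    simpa using hkk
  have hbound := ker_card_le u hfix (j - 1) cc hex
  rw [show j - 1 + 1 = j from by omega] at hbound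
  have h2 : K.card ≤ 2 ^ (j - 1) := hbound
  have hlt : 2 ^ (j - 1) < 2 ^ j := Nat.pow_lt_pow_right one_lt_two (by omega)
  omega

end KerMoore

section Glue

open Finset

theorem gal_fix (n u : ℕ) (hcop : Nat.gcd u n = 1) (hn : 1 < n) :
    ∀ x : GaloisField 2 n, x ^ 2 ^ u = x → x = 0 ∨ x = 1 := by
  letI : Fintype (GaloisField 2 n) := Fintype.ofFinite _
  have hcard : Fintype.card (GaloisField 2 n) = 2 ^ n := by
    rw [← Nat.card_eq_fintype_card]
    exact GaloisField.card 2 n (by omega)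
  have hpce : ∀ x : GaloisField 2 n, x ^ 2 ^ n = x := fun x => by
    rw [← hcard]; exact FiniteField.pow_card x
  intro x hx
  have hiter : ∀ t, x ^ 2 ^ (u * t) = x := by
    intro t
    induction t with
    | zero => simp
    | succ t ih =>
      have h1 : 2 ^ (u * (t + 1)) = 2 ^ (u * t) * 2 ^ u := by
        rw [← pow_add]; ring_nf
      rw [h1, pow_mul, ih, hx]
  have hniter : ∀ (y : GaloisField 2 n) t, y ^ 2 ^ (n * t) = y := by
    intro y t
    induction t with
    | zero => simp
    | succ t ih =>
      have h1 : 2 ^ (n * (t + 1)) = 2 ^ (n * t) * 2 ^ n := by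
        rw [← pow_add]; ring_nf
      rw [h1, pow_mul, ih, hpce]
  obtain ⟨mm, -, hmm⟩ := Nat.exists_mul_mod_eq_one_of_coprime (hcop : Nat.Coprime u n) hn
  set q := u * mm / n with hq
  have hdm : u * mm = n * q + 1 := by
    rw [hq, ← hmm]
    exact (Nat.div_add_mod (u * mm) n).symm
  have hx2 : x ^ 2 ^ (u * mm) = x := hiter mm
  rw [hdm] at hx2
  have h3 : (2 : ℕ) ^ (n * q + 1) = 2 ^ (n * q) * 2 := by rw [pow_succ]
  rw [h3, pow_mul, hniter x q] at hx2
  -- hx2 : x ^ 2 = x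
  have h4 : x * (x - 1) = 0 := by
    have : x ^ 2 - x = 0 := by rw [hx2]; ring
    calc x * (x - 1) = x ^ 2 - x := by ring
      _ = 0 := this
  rcases mul_eq_zero.mp h4 with h | h
  · exact Or.inl h
  · exact Or.inr (by linear_combination h)

theorem exists_indep (n j : ℕ) (hn : n ≠ 0) (hjn : j ≤ n) :
    ∃ w : Fin j → GaloisField 2 n,
      ∀ T : Finset (Fin j), T.Nonempty → ∑ i ∈ T, w i ≠ 0 := by
  have hrank : Module.finrank (ZMod 2) (GaloisField 2 n) = n := GaloisField.finrank 2 hn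
  have hj' : j ≤ Module.finrank (ZMod 2) (GaloisField 2 n) := by rw [hrank]; exact hjn
  let b := Module.finBasis (ZMod 2) (GaloisField 2 n)
  refine ⟨fun i => b (Fin.castLE hj' i), ?_⟩
  intro T hT hsum0
  have hli : LinearIndependent (ZMod 2) (fun i : Fin j => b (Fin.castLE hj' i)) :=
    b.linearIndependent.comp (Fin.castLE hj') (Fin.castLE_injective hj')
  obtain ⟨i0, hi0⟩ := hT
  have := linearIndependent_iff'.mp hli T (fun _ => (1 : ZMod 2))
    (by simpa [one_smul] using hsum0) i0 hi0
  exact one_ne_zero this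

theorem cubeSum_comp {V W U : Type*} [AddCommGroup V] [AddCommGroup W] [AddCommGroup U]
    (f : W → U) (φ : V → W) (hφ : IsAffineF2 φ) (k : ℕ) (a : V) (v : Fin k → V) :
    cubeSum (f ∘ φ) k a v = cubeSum f k (φ a) (fun i => φ (v i) + φ 0) := by
  have hL : ∀ x y : V, φ (x + y) + φ 0 = (φ x + φ 0) + (φ y + φ 0) := by
    intro x y
    rw [hφ x y]
    abel
  set L : V →+ W := AddMonoidHom.mk' (fun x => φ x + φ 0) hL with hLdef
  unfold cubeSum
  refine Finset.sum_congr rfl fun S _ => ?_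
  rw [Function.comp_apply]
  congr 1
  rw [hφ a _]
  have h1 : φ (∑ i ∈ S, v i) + φ 0 = L (∑ i ∈ S, v i) := rfl
  rw [add_assoc, h1, map_sum]
  rfl

end Glue

set_option maxHeartbeats 1600000 in
/-- Let `F(x) = x^d` on `F_{2^n}` with `d = 1 + 2^u + 2^{2u} + ... + 2^{(j-1)u}`, where
`gcd(u, n) = 1` and `1 < j < n`. Then `deg F = j`, and the restriction of `F` to every
affine subspace of dimension `j` (given via an injective affine parametrization
`φ : F_2^j → F_{2^n}`) has algebraic degree exactly `j`; i.e. `F` has full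
degree-stability under restrictions to affine spaces. -/
theorem stmt13 (n u j : ℕ) (hcop : Nat.gcd u n = 1) (hj1 : 1 < j) (hjn : j < n) :
    adeg (fun x : GaloisField 2 n => x ^ (∑ i ∈ Finset.range j, 2 ^ (i * u)))
        = ((j : ℕ) : WithBot ℕ) ∧
    ∀ φ : (Fin j → ZMod 2) → GaloisField 2 n, IsAffineF2 φ → Function.Injective φ →
      adeg ((fun x : GaloisField 2 n => x ^ (∑ i ∈ Finset.range j, 2 ^ (i * u))) ∘ φ)
        = ((j : ℕ) : WithBot ℕ) := by
  have hn1 : 1 < n := by omega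
  have hn0 : n ≠ 0 := by omega
  letI : Fintype (GaloisField 2 n) := Fintype.ofFinite _
  have hfix := gal_fix n u hcop hn1
  obtain ⟨w0, hw0⟩ := exists_indep n j hn0 (le_of_lt hjn)
  constructor
  · refine Aux13.adeg_eq _ j ⟨0, w0, ?_⟩ (fun k hk a v => cube_high j u k hk a v)
    rw [cube_perm]
    exact moore_ne_zero u j (by omega) hfix w0 hw0
  · intro φ hφ hφi
    have hL : ∀ x y : Fin j → ZMod 2, φ (x + y) + φ 0 = (φ x + φ 0) + (φ y + φ 0) := by
      intro x y
      rw [hφ x y]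
      abel
    set L : (Fin j → ZMod 2) →+ GaloisField 2 n :=
      AddMonoidHom.mk' (fun x => φ x + φ 0) hL with hLdef
    have hLinj : Function.Injective L := by
      intro x y hxy
      refine hφi ?_
      have h1 : φ x + φ 0 = φ y + φ 0 := hxy
      exact add_right_cancel h1
    set e : Fin j → (Fin j → ZMod 2) := fun i => Pi.single i 1 with he
    have hwsub : ∀ T : Finset (Fin j), T.Nonempty →
        ∑ i ∈ T, (φ (e i) + φ 0) ≠ 0 := by
      intro T hT h0
      have hsum : L (∑ i ∈ T, e i) = 0 := by
        rw [map_sum]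
        exact h0
      have hz : (∑ i ∈ T, e i) = 0 := by
        apply hLinj
        rw [hsum, map_zero]
      obtain ⟨i0, hi0⟩ := hT
      have hcf := congrFun hz i0
      have : (1 : ZMod 2) = 0 := by
        simpa [he, Finset.sum_apply, Pi.single_apply, Finset.sum_ite_eq', hi0] using hcf
      exact one_ne_zero this
    refine Aux13.adeg_eq _ j ⟨0, e, ?_⟩ (fun k hk a v => ?_)
    · rw [cubeSum_comp _ φ hφ, cube_perm]
      exact moore_ne_zero u j (by omega) hfix _ hwsub
    · rw [cubeSum_comp _ φ hφ]
      exact cube_high j u k hk _ _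
end

section
/- Let I(x) = x^{2^n - 2} be the inverse function on F_{2^n} and let A be an F_2-linear subspace of F_{2^n} of codimension k with 2 ≤ k < n. Then deg(I|_A) ∈ {n - k, n - k - 1}. -/
open Classical Polynomial
open scoped symmDiff

lemma derivative_finset_prod {R : Type*} [CommRing R] {ι : Type*} [DecidableEq ι]
    (s : Finset ι) (f : ι → R[X]) :
    derivative (∏ i ∈ s, f i) = ∑ i ∈ s, (∏ j ∈ s.erase i, f j) * derivative (f i) := by
  induction s using Finset.induction_on with
  | empty => simp
  | @insert a s ha ih =>
    rw [Finset.prod_insert ha, derivative_mul, ih, Finset.sum_insert ha,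
      Finset.erase_insert ha, Finset.mul_sum]
    congr 1
    · ring
    · apply Finset.sum_congr rfl
      intro i hi
      have hne : a ≠ i := fun h => ha (h ▸ hi)
      rw [Finset.erase_insert_of_ne hne, Finset.prod_insert (by simp [ha, Finset.mem_erase])]
      ring

lemma invSum_ne_zero {F : Type*} [Field F] [CharP F 2] (G : Finset F)
    (h0 : (0:F) ∈ G) (hadd : ∀ x ∈ G, ∀ y ∈ G, x + y ∈ G)
    (b : F) (hb : b ∉ G) : ∑ h ∈ G, (b + h)⁻¹ ≠ 0 := by
  classical
  have hchar : ∀ x : F, x + x = 0 := fun x => CharTwo.add_self_eq_zero x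
  have hbh : ∀ h ∈ G, b + h ≠ 0 := by
    intro h hh hbh0
    apply hb
    have : b = h := by
      have : b = -h := eq_neg_of_add_eq_zero_left hbh0
      rw [this, CharTwo.neg_eq]
    rwa [this]
  set c : F := ∏ h ∈ G.erase 0, h with hc
  have hcne : c ≠ 0 :=
    Finset.prod_ne_zero_iff.mpr (fun h hh => (Finset.mem_erase.mp hh).1)
  set P : F[X] := ∏ h ∈ G, (X - C h) with hP
  have hXne : ∀ h : F, (X - C h : F[X]) ≠ 0 := fun h => X_sub_C_ne_zero h
  have hdegP : P.natDegree = G.card := by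
    rw [hP, Polynomial.natDegree_prod _ _ (fun h _ => hXne h)]
    simp [natDegree_X_sub_C]
  have hcard : 0 < G.card := Finset.card_pos.mpr ⟨0, h0⟩
  have hderiv : derivative P = ∑ h ∈ G, ∏ j ∈ G.erase h, (X - C j) := by
    rw [hP, derivative_finset_prod]
    apply Finset.sum_congr rfl
    intro h _
    simp
  -- evaluation of derivative at any g ∈ G equals c
  have heval : ∀ g ∈ G, (derivative P).eval g = c := by
    intro g hg
    rw [hderiv, eval_finset_sum]
    rw [Finset.sum_eq_single g]
    · rw [eval_prod]
      apply Finset.prod_nbij' (i := fun j => g + j) (j := fun h => g + h)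
      · intro j hj
        obtain ⟨hj1, hj2⟩ := Finset.mem_erase.mp hj
        refine Finset.mem_erase.mpr ⟨?_, hadd g hg j hj2⟩
        intro h0'
        apply hj1
        have : j = -g := eq_neg_of_add_eq_zero_right h0'
        rw [this, CharTwo.neg_eq]
      · intro h hh
        obtain ⟨hh1, hh2⟩ := Finset.mem_erase.mp hh
        refine Finset.mem_erase.mpr ⟨?_, hadd g hg h hh2⟩
        intro h0'
        apply hh1
        have := congrArg (fun x => g + x) h0'.symm
        simpa [← add_assoc, hchar] using this.symm
      · intro j hj
        simp [← add_assoc, hchar]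
      · intro h hh
        simp [← add_assoc, hchar]
      · intro j hj
        simp [eval_sub, CharTwo.sub_eq_add]
    · intro h hh hne
      rw [eval_prod]
      apply Finset.prod_eq_zero (Finset.mem_erase.mpr ⟨Ne.symm hne, hg⟩)
      simp
    · intro h; exact absurd hg h
  -- derivative P = C c
  have hdc : derivative P = C c := by
    have hz : derivative P - C c = 0 := by
      apply eq_zero_of_natDegree_lt_card_of_eval_eq_zero' _ G
      · intro g hg
        simp [heval g hg]
      · calc (derivative P - C c).natDegree
            ≤ max (derivative P).natDegree (C c).natDegree := natDegree_sub_le _ _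
          _ < G.card := by
              rw [natDegree_C]
              have h1 : (derivative P).natDegree < P.natDegree :=
                natDegree_derivative_lt (by omega)
              simp only [max_eq_left (Nat.zero_le _)]
              omega
    linear_combination (norm := ring_nf) hz
  have hPb : P.eval b ≠ 0 := by
    rw [hP, eval_prod]
    apply Finset.prod_ne_zero_iff.mpr
    intro h hh
    rw [eval_sub, eval_X, eval_C, CharTwo.sub_eq_add]
    exact hbh h hh
  have hterm : ∀ h ∈ G, (b + h)⁻¹ * P.eval b = ∏ j ∈ G.erase h, (b - j) := by
    intro h hh
    rw [hP, eval_prod]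
    have : ∀ j : F, (X - C j : F[X]).eval b = b - j := by intro j; simp
    rw [Finset.prod_congr rfl (fun j _ => this j)]
    rw [← Finset.mul_prod_erase G _ hh, ← mul_assoc, CharTwo.sub_eq_add,
      inv_mul_cancel₀ (hbh h hh), one_mul]
  have hsum2 : ∑ h ∈ G, ∏ j ∈ G.erase h, (b - j) = c := by
    have := congrArg (eval b) hdc
    rw [hderiv] at this
    simpa [eval_finset_sum, eval_prod] using this
  have hkey : (∑ h ∈ G, (b + h)⁻¹) * P.eval b = c := by
    rw [Finset.sum_mul, Finset.sum_congr rfl hterm, hsum2]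
  intro hS
  rw [hS, zero_mul] at hkey
  exact hcne hkey.symm


lemma sum_symmDiff_char2 {ι V : Type*} [DecidableEq ι] [AddCommGroup V]
    (h2 : ∀ x : V, x + x = 0) (s t : Finset ι) (v : ι → V) :
    ∑ i ∈ s ∆ t, v i = ∑ i ∈ s, v i + ∑ i ∈ t, v i := by
  classical
  have h1 : s ∆ t = (s \ t) ∪ (t \ s) := by rw [symmDiff_def]; rfl
  have hd : Disjoint (s \ t) (t \ s) := disjoint_sdiff_sdiff
  rw [h1, Finset.sum_union hd]
  have hs : ∑ i ∈ s ∩ t, v i + ∑ i ∈ s \ t, v i = ∑ i ∈ s, v i :=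
    Finset.sum_inter_add_sum_sdiff s t v
  have ht : ∑ i ∈ t ∩ s, v i + ∑ i ∈ t \ s, v i = ∑ i ∈ t, v i :=
    Finset.sum_inter_add_sum_sdiff t s v
  rw [Finset.inter_comm] at ht
  have := h2 (∑ i ∈ s ∩ t, v i)
  calc ∑ i ∈ s \ t, v i + ∑ i ∈ t \ s, v i
      = (∑ i ∈ s ∩ t, v i + ∑ i ∈ s \ t, v i) + (∑ i ∈ s ∩ t, v i + ∑ i ∈ t \ s, v i) := by
        rw [add_add_add_comm, this, zero_add]
    _ = ∑ i ∈ s, v i + ∑ i ∈ t, v i := by rw [hs, ht]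

lemma cubeSum_eq_zero_of_dep {V W : Type*} [AddCommGroup V] [AddCommGroup W]
    (h2V : ∀ x : V, x + x = 0) (h2W : ∀ x : W, x + x = 0)
    (f : V → W) (k : ℕ) (a : V) (v : Fin k → V)
    (T : Finset (Fin k)) (hT : T ≠ ∅) (hTv : ∑ i ∈ T, v i = 0) :
    cubeSum f k a v = 0 := by
  classical
  unfold cubeSum
  apply Finset.sum_ninvolution (g := fun S => S ∆ T)
  · intro S
    have h : ∑ i ∈ S ∆ T, v i = ∑ i ∈ S, v i := by
      rw [sum_symmDiff_char2 h2V, hTv, add_zero]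
    rw [h]
    exact h2W _
  · intro S _
    rw [ne_eq, symmDiff_eq_left]
    simpa using hT
  · intro S
    exact Finset.mem_univ _
  · intro S
    exact symmDiff_symmDiff_cancel_right T S

lemma cubeSum_eq_zero_of_lt {W : Type*} [AddCommGroup W] (h2W : ∀ x : W, x + x = 0)
    (m k : ℕ) (hmk : m < k) (f : (Fin m → ZMod 2) → W)
    (a : Fin m → ZMod 2) (v : Fin k → (Fin m → ZMod 2)) :
    cubeSum f k a v = 0 := by
  classical
  have h2V : ∀ x : Fin m → ZMod 2, x + x = 0 := by
    intro x; funext j; exact CharTwo.add_self_eq_zero (x j)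
  have hcard : Fintype.card (Fin m → ZMod 2) < Fintype.card (Finset (Fin k)) := by
    simp only [Fintype.card_finset, Fintype.card_fun, ZMod.card, Fintype.card_fin]
    exact Nat.pow_lt_pow_right (by norm_num : 1 < 2) hmk
  obtain ⟨S₁, S₂, hne, heq⟩ :=
    Fintype.exists_ne_map_eq_of_card_lt (fun S : Finset (Fin k) => ∑ i ∈ S, v i) hcard
  refine cubeSum_eq_zero_of_dep h2V h2W f k a v (S₁ ∆ S₂) ?_ ?_
  · intro h
    exact hne (symmDiff_eq_bot.mp h)
  · rw [sum_symmDiff_char2 h2V, heq]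
    exact h2V _

lemma adeg_inv_comp {n m : ℕ} (hm1 : 1 ≤ m)
    (φ : (Fin m → ZMod 2) → GaloisField 2 n)
    (hφ : IsLinearF2 φ) (hinj : Function.Injective φ) :
    adeg ((fun x : GaloisField 2 n => x⁻¹) ∘ φ) = (m : WithBot ℕ) ∨
    adeg ((fun x : GaloisField 2 n => x⁻¹) ∘ φ) = ((m - 1 : ℕ) : WithBot ℕ) := by
  classical
  have hφ0 : φ 0 = 0 := by
    have h := hφ 0 0
    rw [add_zero] at h
    exact (left_eq_add.mp h)
  have h2W : ∀ x : GaloisField 2 n, x + x = 0 := fun x => CharTwo.add_self_eq_zero x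
  have h2V : ∀ x : Fin m → ZMod 2, x + x = 0 := by
    intro x; funext j; exact CharTwo.add_self_eq_zero (x j)
  set z0 : Fin m := ⟨0, hm1⟩ with hz0
  set ι : Fin (m-1) → Fin m := fun i => ⟨i.1 + 1, by omega⟩ with hιdef
  have hι : Function.Injective ι := by
    intro i j h
    have : i.1 + 1 = j.1 + 1 := congrArg Fin.val h
    exact Fin.ext (by omega)
  have hιz : ∀ i, ι i ≠ z0 := by
    intro i h
    have : i.1 + 1 = 0 := congrArg Fin.val h
    omega
  set σ : Finset (Fin (m-1)) → (Fin m → ZMod 2) :=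
    fun S => ∑ i ∈ S, Pi.single (ι i) (1 : ZMod 2) with hσdef
  have hσz : ∀ S, σ S z0 = 0 := by
    intro S
    show (∑ i ∈ S, (Pi.single (ι i) (1 : ZMod 2) : Fin m → ZMod 2)) z0 = 0
    simp only [Finset.sum_apply]
    exact Finset.sum_eq_zero (fun i _ => Pi.single_eq_of_ne (Ne.symm (hιz i)) 1)
  have hσap : ∀ S i, σ S (ι i) = if i ∈ S then 1 else 0 := by
    intro S i
    show (∑ j ∈ S, (Pi.single (ι j) (1 : ZMod 2) : Fin m → ZMod 2)) (ι i) = if i ∈ S then 1 else 0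
    simp only [Finset.sum_apply]
    have h : ∀ j ∈ S, (Pi.single (ι j) (1:ZMod 2) : Fin m → ZMod 2) (ι i)
        = if i = j then (1:ZMod 2) else 0 := by
      intro j _
      rcases eq_or_ne i j with rfl | hne
      · simp [Pi.single_eq_same]
      · rw [if_neg hne]
        exact Pi.single_eq_of_ne (fun h => hne (hι h)) 1
    rw [Finset.sum_congr rfl h, Finset.sum_ite_eq]
  have hσinj : Function.Injective σ := by
    intro S S' h
    ext i
    have h2 := congrFun h (ι i)
    rw [hσap, hσap] at h2
    by_cases hS : i ∈ S <;> by_cases hS' : i ∈ S' <;> simp_all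
  have hσsymm : ∀ S S', σ S + σ S' = σ (S ∆ S') := by
    intro S S'
    exact (sum_symmDiff_char2 h2V S S' _).symm
  set a0 : Fin m → ZMod 2 := Pi.single z0 1 with ha0
  set G : Finset (GaloisField 2 n) := Finset.image (fun S => φ (σ S)) Finset.univ with hGdef
  have hG0 : (0 : GaloisField 2 n) ∈ G := by
    refine Finset.mem_image.mpr ⟨∅, Finset.mem_univ _, ?_⟩
    have h : σ ∅ = 0 := Finset.sum_empty
    rw [h, hφ0]
  have hGadd : ∀ x ∈ G, ∀ y ∈ G, x + y ∈ G := by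
    intro x hx y hy
    obtain ⟨S, _, rfl⟩ := Finset.mem_image.mp hx
    obtain ⟨S', _, rfl⟩ := Finset.mem_image.mp hy
    refine Finset.mem_image.mpr ⟨S ∆ S', Finset.mem_univ _, ?_⟩
    rw [← hσsymm, hφ]
  have hbG : φ a0 ∉ G := by
    intro hbG
    obtain ⟨S, _, hS⟩ := Finset.mem_image.mp hbG
    have h3 : σ S = a0 := hinj hS
    have h4 := congrFun h3 z0
    rw [hσz] at h4
    have h5 : a0 z0 = 1 := Pi.single_eq_same z0 1
    rw [h5] at h4
    exact one_ne_zero h4.symm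
  set v : Fin (m-1) → (Fin m → ZMod 2) := fun i => Pi.single (ι i) 1 with hv
  have hcs : cubeSum ((fun x : GaloisField 2 n => x⁻¹) ∘ φ) (m-1) a0 v
      = ∑ h ∈ G, (φ a0 + h)⁻¹ := by
    rw [hGdef, Finset.sum_image (fun S _ S' _ h => hσinj (hinj h))]
    unfold cubeSum
    refine Finset.sum_congr rfl (fun S _ => ?_)
    show (φ (a0 + σ S))⁻¹ = (φ a0 + φ (σ S))⁻¹
    rw [hφ]
  have hlow : cubeSum ((fun x : GaloisField 2 n => x⁻¹) ∘ φ) (m-1) a0 v ≠ 0 := by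
    rw [hcs]; exact invSum_ne_zero G hG0 hGadd (φ a0) hbG
  have hupper : ∀ j, m < j → ∀ a (v' : Fin j → (Fin m → ZMod 2)),
      cubeSum ((fun x : GaloisField 2 n => x⁻¹) ∘ φ) j a v' = 0 :=
    fun j hj a v' => cubeSum_eq_zero_of_lt h2W m j hj _ a v'
  have hex : ∃ j : ℕ, ∃ a v, cubeSum ((fun x : GaloisField 2 n => x⁻¹) ∘ φ) j a v ≠ 0 :=
    ⟨m-1, a0, v, hlow⟩
  have hDb : ∀ j ∈ {j : ℕ | ∃ a v, cubeSum ((fun x : GaloisField 2 n => x⁻¹) ∘ φ) j a v ≠ 0},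
      j ≤ m := by
    intro j hj
    by_contra h
    obtain ⟨a, v', hv'⟩ := hj
    exact hv' (hupper j (by omega) a v')
  have hset : BddAbove {j : ℕ | ∃ a v, cubeSum ((fun x : GaloisField 2 n => x⁻¹) ∘ φ) j a v ≠ 0} :=
    ⟨m, hDb⟩
  have h1 : m - 1 ≤ sSup {j : ℕ | ∃ a v, cubeSum ((fun x : GaloisField 2 n => x⁻¹) ∘ φ) j a v ≠ 0} :=
    le_csSup hset ⟨a0, v, hlow⟩
  have h2 : sSup {j : ℕ | ∃ a v, cubeSum ((fun x : GaloisField 2 n => x⁻¹) ∘ φ) j a v ≠ 0} ≤ m :=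
    csSup_le ⟨m-1, ⟨a0, v, hlow⟩⟩ hDb
  rw [adeg, dif_pos hex]
  rcases (by omega : sSup {j : ℕ | ∃ a v, cubeSum ((fun x : GaloisField 2 n => x⁻¹) ∘ φ) j a v ≠ 0} = m ∨
      sSup {j : ℕ | ∃ a v, cubeSum ((fun x : GaloisField 2 n => x⁻¹) ∘ φ) j a v ≠ 0} = m - 1) with h | h
  · left; rw [h]
  · right; rw [h]


/-- Let `I(x) = x⁻¹` (with `0⁻¹ = 0`, i.e. `I(x) = x^{2^n-2}`) be the inverse function
on `F_{2^n}` and let `A` be an `F_2`-linear subspace of codimension `k`, `2 ≤ k < n`,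
given via an injective linear parametrization `φ : F_2^{n-k} → F_{2^n}`. Then
`deg(I|_A) ∈ {n - k, n - k - 1}`. -/
theorem stmt15 (n k : ℕ) (hk2 : 2 ≤ k) (hkn : k < n)
    (φ : (Fin (n - k) → ZMod 2) → GaloisField 2 n)
    (hφ : IsLinearF2 φ) (hinj : Function.Injective φ) :
    adeg ((fun x : GaloisField 2 n => x⁻¹) ∘ φ) = ((n - k : ℕ) : WithBot ℕ) ∨
    adeg ((fun x : GaloisField 2 n => x⁻¹) ∘ φ) = ((n - k - 1 : ℕ) : WithBot ℕ) := by
  exact adeg_inv_comp (by omega) φ hφ hinj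
end

section
/- Let n be odd and let I(x) = x^{2^n-2} be the inverse function on F_{2^n}. Then for every affine subspace A of F_{2^n} of codimension 2, deg(I|_A) = n - 2. -/
open Classical Polynomial Finset
open scoped symmDiff

section AuxStmt16

variable {K : Type*} [Field K]

variable {K : Type*} [Field K]

lemma eq_of_add_eq_zero' (h2 : ∀ a : K, a + a = 0) {a b : K} (h : a + b = 0) : a = b := by
  linear_combination h - h2 b

lemma key_deriv (V : Finset K) (h0 : (0:K) ∈ V)
    (hadd : ∀ a ∈ V, ∀ b ∈ V, a + b ∈ V) (h2 : ∀ a : K, a + a = 0) (c : K) :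
    ∑ v ∈ V, ∏ w ∈ V.erase v, (c + w) = ∏ w ∈ V.erase 0, w := by
  have hcard : 1 ≤ V.card := Finset.card_pos.mpr ⟨0, h0⟩
  set P : K[X] := (∑ v ∈ V, ∏ w ∈ V.erase v, (X + C w)) - C (∏ w ∈ V.erase 0, w) with hP
  have heval : ∀ u ∈ V, P.eval u = 0 := by
    intro u hu
    have hkey : ∑ v ∈ V, ∏ w ∈ V.erase v, (u + w) = ∏ w ∈ V.erase 0, w := by
      rw [Finset.sum_eq_single_of_mem u hu]
      · refine Finset.prod_nbij' (fun w => u + w) (fun z => u + z) ?_ ?_ ?_ ?_ ?_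
        · intro w hw
          rw [mem_erase] at hw ⊢
          exact ⟨fun h => hw.1 (eq_of_add_eq_zero' h2 h).symm, hadd u hu w hw.2⟩
        · intro z hz
          rw [mem_erase] at hz ⊢
          refine ⟨fun h => hz.1 ?_, hadd u hu z hz.2⟩
          exact add_left_cancel (a := u) (by rw [add_zero]; exact h)
        · intro w hw; show u + (u + w) = w; rw [← add_assoc, h2 u, zero_add]
        · intro z hz; show u + (u + z) = z; rw [← add_assoc, h2 u, zero_add]
        · intro w hw; rfl
      · intro v hv hvu
        apply Finset.prod_eq_zero (Finset.mem_erase.mpr ⟨fun h => hvu h.symm, hu⟩)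
        exact h2 u
    simp only [hP, eval_sub, eval_finset_sum, eval_prod, eval_add, eval_X, eval_C]
    rw [hkey, sub_self]
  have hdeg : P.natDegree < V.card := by
    have h1 : (∑ v ∈ V, ∏ w ∈ V.erase v, (X + C w) : K[X]).natDegree ≤ V.card - 1 := by
      apply Polynomial.natDegree_sum_le_of_forall_le
      intro v hv
      calc (∏ w ∈ V.erase v, (X + C w) : K[X]).natDegree
          ≤ ∑ w ∈ V.erase v, (X + C w : K[X]).natDegree := Polynomial.natDegree_prod_le _ _
        _ = (V.erase v).card := by simp [natDegree_X_add_C]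
        _ = V.card - 1 := Finset.card_erase_of_mem hv
    calc P.natDegree ≤ max (∑ v ∈ V, ∏ w ∈ V.erase v, (X + C w) : K[X]).natDegree
          (C (∏ w ∈ V.erase 0, w) : K[X]).natDegree := Polynomial.natDegree_sub_le _ _
      _ ≤ V.card - 1 := by
          rw [natDegree_C]; exact max_le h1 (Nat.zero_le _)
      _ < V.card := by omega
  have hPz : P = 0 := Polynomial.eq_zero_of_natDegree_lt_card_of_eval_eq_zero' P V heval hdeg
  have hev := congrArg (Polynomial.eval c) hPz
  simp only [hP, eval_sub, eval_finset_sum, eval_prod, eval_add, eval_X, eval_C, eval_zero] at hev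
  linear_combination hev

lemma L_additive (V : Finset K) (h0 : (0:K) ∈ V)
    (hadd : ∀ a ∈ V, ∀ b ∈ V, a + b ∈ V) (h2 : ∀ a : K, a + a = 0) (x y : K) :
    ∏ w ∈ V, (x + y + w) = ∏ w ∈ V, (x + w) + ∏ w ∈ V, (y + w) := by
  have hcard : 1 ≤ V.card := Finset.card_pos.mpr ⟨0, h0⟩
  have hLshift : ∀ u ∈ V, ∀ z : K, ∏ w ∈ V, (u + z + w) = ∏ w ∈ V, (z + w) := by
    intro u hu z
    refine Finset.prod_nbij' (fun w => u + w) (fun w => u + w) ?_ ?_ ?_ ?_ ?_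
    · exact fun w hw => hadd u hu w hw
    · exact fun w hw => hadd u hu w hw
    · intro w hw; show u + (u + w) = w; rw [← add_assoc, h2 u, zero_add]
    · intro w hw; show u + (u + w) = w; rw [← add_assoc, h2 u, zero_add]
    · intro w hw; show u + z + w = z + (u + w); ring
  have hLzero : ∀ u ∈ V, ∏ w ∈ V, (u + w) = 0 := by
    intro u hu
    exact Finset.prod_eq_zero hu (h2 u)
  set p : K[X] := ∏ w ∈ V, (X + C (y + w)) with hp
  set q : K[X] := ∏ w ∈ V, (X + C w) with hq
  set P : K[X] := p - q - C (∏ w ∈ V, (y + w)) with hP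
  have hpm : p.Monic := monic_prod_of_monic _ _ (fun w _ => monic_X_add_C _)
  have hqm : q.Monic := monic_prod_of_monic _ _ (fun w _ => monic_X_add_C _)
  have hpd : p.natDegree = V.card := by
    rw [hp, natDegree_prod_of_monic _ _ (fun w _ => monic_X_add_C _)]
    simp only [natDegree_X_add_C, Finset.sum_const, smul_eq_mul, mul_one]
  have hqd : q.natDegree = V.card := by
    rw [hq, natDegree_prod_of_monic _ _ (fun w _ => monic_X_add_C _)]
    simp only [natDegree_X_add_C, Finset.sum_const, smul_eq_mul, mul_one]
  have hdeglt : P.degree < (V.card : WithBot ℕ) := by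
    have h1 : (p - q).degree < (V.card : WithBot ℕ) := by
      have := Polynomial.degree_sub_lt (show p.degree = q.degree by
          rw [degree_eq_natDegree hpm.ne_zero, degree_eq_natDegree hqm.ne_zero, hpd, hqd])
        hpm.ne_zero (by rw [hpm.leadingCoeff, hqm.leadingCoeff])
      rwa [degree_eq_natDegree hpm.ne_zero, hpd] at this
    have h2' : (C (∏ w ∈ V, (y + w)) : K[X]).degree < (V.card : WithBot ℕ) := by
      apply lt_of_le_of_lt (degree_C_le)
      exact_mod_cast WithBot.coe_lt_coe.mpr (by omega)
    exact lt_of_le_of_lt (Polynomial.degree_sub_le _ _) (max_lt h1 h2')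
  have hpe : ∀ z : K, p.eval z = ∏ w ∈ V, (z + y + w) := by
    intro z
    rw [hp, eval_prod]
    apply Finset.prod_congr rfl
    intro w hw
    simp [eval_add, eval_X, eval_C]
    ring
  have hqe : ∀ z : K, q.eval z = ∏ w ∈ V, (z + w) := by
    intro z
    rw [hq, eval_prod]
    simp
  have heval : ∀ u ∈ V, P.eval u = 0 := by
    intro u hu
    simp only [hP, eval_sub, eval_C]
    rw [hpe, hqe, hLshift u hu y, hLzero u hu]
    ring
  have hPz : P = 0 := by
    by_cases hPc : P = 0
    · exact hPc
    · exact Polynomial.eq_zero_of_natDegree_lt_card_of_eval_eq_zero' P V heval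
        ((natDegree_lt_iff_degree_lt hPc).mpr hdeglt)
  have hev := congrArg (Polynomial.eval x) hPz
  simp only [hP, eval_sub, eval_C, eval_zero] at hev
  rw [hpe, hqe] at hev
  linear_combination hev

lemma pi_ne_zero (V : Finset K) : ∏ w ∈ V.erase 0, w ≠ 0 :=
  Finset.prod_ne_zero_iff.mpr (fun w hw => (Finset.mem_erase.mp hw).1)

lemma L_ne_zero (V : Finset K) (h2 : ∀ a : K, a + a = 0) {c : K} (hc : c ∉ V) :
    ∏ w ∈ V, (c + w) ≠ 0 :=
  Finset.prod_ne_zero_iff.mpr (fun w hw h => hc ((eq_of_add_eq_zero' h2 h) ▸ hw))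

lemma coset_sum (V : Finset K) (h0 : (0:K) ∈ V)
    (hadd : ∀ a ∈ V, ∀ b ∈ V, a + b ∈ V) (h2 : ∀ a : K, a + a = 0) {c : K} (hc : c ∉ V) :
    ∑ v ∈ V, (c + v)⁻¹ = (∏ w ∈ V.erase 0, w) * (∏ w ∈ V, (c + w))⁻¹ := by
  have hne : ∀ v ∈ V, c + v ≠ 0 := fun v hv h => hc ((eq_of_add_eq_zero' h2 h) ▸ hv)
  have hstep : ∀ v ∈ V, (c + v)⁻¹ = (∏ w ∈ V.erase v, (c + w)) * (∏ w ∈ V, (c + w))⁻¹ := by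
    intro v hv
    rw [← Finset.mul_prod_erase V _ hv, mul_inv]
    rw [← mul_assoc, mul_comm (∏ w ∈ V.erase v, (c + w)), mul_assoc, mul_inv_cancel₀, mul_one]
    exact Finset.prod_ne_zero_iff.mpr (fun w hw => hne w (Finset.mem_erase.mp hw).2)
  rw [Finset.sum_congr rfl hstep, ← Finset.sum_mul, key_deriv V h0 hadd h2 c]

lemma coset_sum_ne_zero (V : Finset K) (h0 : (0:K) ∈ V)
    (hadd : ∀ a ∈ V, ∀ b ∈ V, a + b ∈ V) (h2 : ∀ a : K, a + a = 0) {c : K} (hc : c ∉ V) :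
    ∑ v ∈ V, (c + v)⁻¹ ≠ 0 := by
  rw [coset_sum V h0 hadd h2 hc]
  exact mul_ne_zero (pi_ne_zero V) (inv_ne_zero (L_ne_zero V h2 hc))

lemma omega_contra [Fintype K] (h2 : ∀ a : K, a + a = 0)
    (h3 : ¬ (3 ∣ Fintype.card K - 1)) {α β : K} (hβ : β ≠ 0)
    (hs : α + β ≠ 0) (h : α^2 + α*β + β^2 = 0) : False := by
  have hα : α ≠ 0 := by
    rintro rfl
    simp only [ne_eq, zero_pow, zero_mul, zero_add] at h
    exact hβ (by rw [← sq_eq_zero_iff (a := β)]; linear_combination h)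
  obtain ⟨t, ht⟩ : ∃ t : K, t = α * β⁻¹ := ⟨_, rfl⟩
  have ht0 : t ≠ 0 := by rw [ht]; exact mul_ne_zero hα (inv_ne_zero hβ)
  have hβ2 : β^2 ≠ 0 := pow_ne_zero _ hβ
  have htt : t^2 + t + 1 = 0 := by
    have key : (t^2 + t + 1) * β^2 = α^2 + α*β + β^2 := by
      rw [ht]; field_simp
    have h0 : (t^2 + t + 1) * β^2 = 0 := by rw [key, h]
    exact (mul_eq_zero.mp h0).resolve_right hβ2
  have ht1 : t ≠ 1 := by
    intro h'
    rw [h', one_pow] at htt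
    have h1 := h2 (1 : K)
    have : (1 : K) = 0 := by linear_combination htt - h1
    exact one_ne_zero this
  have ht3 : t^3 = 1 := by linear_combination (t - 1) * htt
  set u : Kˣ := Units.mk0 t ht0 with hu
  have hu3 : u^3 = 1 := by
    ext
    push_cast
    exact ht3
  have hdvd : orderOf u ∣ 3 := orderOf_dvd_of_pow_eq_one hu3
  have hne1 : orderOf u ≠ 1 := by
    intro h'
    rw [orderOf_eq_one_iff] at h'
    apply ht1
    have := congrArg Units.val h'
    simpa [hu] using this
  have ho3 : orderOf u = 3 := by
    rcases (Nat.Prime.eq_one_or_self_of_dvd Nat.prime_three _ hdvd) with h' | h'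
    · exact absurd h' hne1
    · exact h'
  apply h3
  rw [← Fintype.card_units (α := K), ← ho3]
  exact orderOf_dvd_card

lemma odd_no_three {n : ℕ} (hodd : Odd n) : ¬ (3 ∣ 2 ^ n - 1) := by
  obtain ⟨k, hk⟩ := hodd
  have h4 : 3 ∣ 4 ^ k - 1 := by simpa using Nat.sub_dvd_pow_sub_pow 4 1 k
  have h4' : 1 ≤ 4 ^ k := Nat.one_le_pow _ _ (by norm_num)
  have h2n : 2 ^ n = 2 * 4 ^ k := by
    rw [hk, pow_succ, pow_mul]
    norm_num
    ring
  obtain ⟨a, ha⟩ := h4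
  rintro ⟨b, hb⟩
  omega

lemma sum_inv_univ_eq_zero [Fintype K] (hcard : 2 < Fintype.card K) :
    ∑ x : K, x⁻¹ = 0 := by
  have h1 : ∑ x : K, x⁻¹ = ∑ x : K, x :=
    Fintype.sum_bijective (·⁻¹) inv_involutive.bijective _ _ (fun x => rfl)
  rw [h1]
  -- find a ∉ {0, 1}
  have hne : (({0, 1}ᶜ : Finset K)).Nonempty := by
    rw [← Finset.card_pos, Finset.card_compl]
    have : ({0, 1} : Finset K).card ≤ 2 := Finset.card_insert_le _ _ |>.trans (by simp)
    omega
  obtain ⟨a, ha⟩ := hne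
  rw [Finset.mem_compl, Finset.mem_insert, Finset.mem_singleton] at ha
  push_neg at ha
  obtain ⟨ha0, ha1⟩ := ha
  have h2 : ∑ x : K, a * x = ∑ x : K, x :=
    Fintype.sum_bijective (a * ·) (mulLeft_bijective₀ a ha0) _ _ (fun x => rfl)
  rw [← Finset.mul_sum] at h2
  by_contra hS
  exact ha1 (mul_right_cancel₀ hS (h2.trans (one_mul _).symm))

lemma dom_char2 {m : ℕ} (x : Fin m → ZMod 2) : x + x = 0 := by
  funext j
  show x j + x j = 0
  have : x j + x j = (2 : ZMod 2) * x j := by ring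
  rw [this, show (2 : ZMod 2) = 0 by decide, zero_mul]

lemma cube_zero {m : ℕ} {W : Type*} [AddCommGroup W] (hW : ∀ w : W, w + w = 0)
    (f : (Fin m → ZMod 2) → W) {k : ℕ} (hk : m < k) (a : Fin m → ZMod 2)
    (v : Fin k → (Fin m → ZMod 2)) : cubeSum f k a v = 0 := by
  have hnotli : ¬ LinearIndependent (ZMod 2) v := by
    intro hli
    have := hli.fintype_card_le_finrank
    rw [Fintype.card_fin, Module.finrank_fin_fun] at this
    omega
  rw [Fintype.not_linearIndependent_iff] at hnotli
  obtain ⟨g, hg, i0, hi0⟩ := hnotli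
  set T : Finset (Fin k) := Finset.univ.filter (fun i => g i = 1) with hT
  have hmem : ∀ s : ZMod 2, s = 0 ∨ s = 1 := by decide
  have hTne : T.Nonempty := ⟨i0, by
    rw [hT, Finset.mem_filter]
    exact ⟨Finset.mem_univ _, (hmem (g i0)).resolve_left hi0⟩⟩
  have hTsum : ∑ i ∈ T, v i = 0 := by
    rw [← hg]
    rw [← Finset.sum_filter_add_sum_filter_not Finset.univ (fun i => g i = 1) (fun i => g i • v i)]
    have e1 : ∑ i ∈ Finset.univ.filter (fun i => g i = 1), g i • v i = ∑ i ∈ T, v i := by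
      apply Finset.sum_congr rfl
      intro i hi
      rw [Finset.mem_filter] at hi
      rw [hi.2, one_smul]
    have e2 : ∑ i ∈ Finset.univ.filter (fun i => ¬ g i = 1), g i • v i = 0 := by
      apply Finset.sum_eq_zero
      intro i hi
      rw [Finset.mem_filter] at hi
      rw [(hmem (g i)).resolve_right hi.2, zero_smul]
    rw [e1, e2, add_zero]
  have hval : ∀ S : Finset (Fin k), ∑ i ∈ S ∆ T, v i = ∑ i ∈ S, v i := by
    intro S
    have h1 : ∑ i ∈ S, v i + ∑ i ∈ T, v i = ∑ i ∈ S ∪ T, v i + ∑ i ∈ S ∩ T, v i :=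
      Finset.sum_union_inter.symm
    have h2 : S ∪ T = (S ∆ T) ∪ (S ∩ T) := by
      rw [Finset.sup_eq_union.symm, ← symmDiff_sup_inf S T]
      rfl
    have h3 : Disjoint (S ∆ T) (S ∩ T) := by
      have := disjoint_symmDiff_inf S T
      simpa using this
    rw [h2, Finset.sum_union h3] at h1
    rw [hTsum, add_zero] at h1
    rw [h1, add_assoc, dom_char2, add_zero]
  rw [cubeSum]
  apply Finset.sum_involution (fun S _ => S ∆ T)
  · intro S hS
    rw [hval S]
    exact hW _
  · intro S hS _
    rw [ne_eq, symmDiff_eq_left]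
    intro h
    rw [h] at hTne
    simp at hTne
  · intro S hS
    exact Finset.mem_univ _
  · intro S hS
    exact symmDiff_symmDiff_cancel_right _ _

lemma cube_top {m : ℕ} {W : Type*} [AddCommGroup W] (f : (Fin m → ZMod 2) → W) :
    cubeSum f m 0 (fun i => Pi.single i 1) = ∑ y : Fin m → ZMod 2, f y := by
  have hb : Function.Bijective
      (fun S : Finset (Fin m) => ∑ i ∈ S, (Pi.single i 1 : Fin m → ZMod 2)) := by
    rw [Fintype.bijective_iff_injective_and_card]
    constructor
    · intro S S' h
      ext j
      have hS := congrFun h j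
      dsimp only at hS
      rw [Finset.sum_apply, Finset.sum_apply, Finset.sum_pi_single, Finset.sum_pi_single] at hS
      by_cases hj : j ∈ S
      · rw [if_pos hj] at hS
        by_cases hj' : j ∈ S'
        · simp [hj, hj']
        · rw [if_neg hj'] at hS
          exact absurd hS one_ne_zero
      · rw [if_neg hj] at hS
        by_cases hj' : j ∈ S'
        · rw [if_pos hj'] at hS
          exact absurd hS.symm one_ne_zero
        · simp [hj, hj']
    · rw [Fintype.card_finset]
      rw [Fintype.card_fun]
      simp [ZMod.card]
  rw [cubeSum]
  exact Fintype.sum_bijective _ hb _ f (fun S => by rw [zero_add])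

lemma main_aux {K : Type*} [Field K] [Fintype K] {m : ℕ}
    (h2 : ∀ a : K, a + a = 0)
    (hcardK : Fintype.card K = 2 ^ (m + 2))
    (h3 : ¬ (3 ∣ (Fintype.card K - 1)))
    (φ : (Fin m → ZMod 2) → K) (hφ : IsAffineF2 φ) (hinj : Function.Injective φ) :
    ∑ y : Fin m → ZMod 2, (φ y)⁻¹ ≠ 0 := by
  obtain ⟨c, hcdef⟩ : ∃ c : K, c = φ 0 := ⟨_, rfl⟩
  obtain ⟨ψ, hψdef⟩ : ∃ ψ : (Fin m → ZMod 2) → K, ψ = fun y => φ y + c := ⟨_, rfl⟩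
  have hψ : ∀ y, ψ y = φ y + c := fun y => by rw [hψdef]
  have hψ0 : ψ 0 = 0 := by rw [hψ, ← hcdef, h2]
  have hψadd : ∀ x y, ψ (x + y) = ψ x + ψ y := by
    intro x y
    rw [hψ, hψ, hψ, hφ x y, ← hcdef]
    ring
  have hψinj : Function.Injective ψ := by
    intro x y h
    rw [hψ, hψ] at h
    exact hinj (add_right_cancel h)
  have hφy : ∀ y, φ y = c + ψ y := by
    intro y
    rw [hψ]
    rw [show c + (φ y + c) = φ y + (c + c) by ring, h2, add_zero]
  obtain ⟨V, hVdef⟩ : ∃ V : Finset K, V = Finset.univ.image ψ := ⟨_, rfl⟩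
  have h0V : (0:K) ∈ V := by
    rw [hVdef, Finset.mem_image]
    exact ⟨0, Finset.mem_univ _, hψ0⟩
  have haddV : ∀ a ∈ V, ∀ b ∈ V, a + b ∈ V := by
    intro a ha b hb
    rw [hVdef, Finset.mem_image] at ha hb ⊢
    obtain ⟨x, _, rfl⟩ := ha
    obtain ⟨y, _, rfl⟩ := hb
    exact ⟨x + y, Finset.mem_univ _, hψadd x y⟩
  have hcarddom : Fintype.card (Fin m → ZMod 2) = 2 ^ m := by
    rw [Fintype.card_fun]
    simp [ZMod.card]
  have hcardV : V.card = 2 ^ m := by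
    rw [hVdef, Finset.card_image_of_injective _ hψinj, Finset.card_univ, hcarddom]
  have hrw : ∑ v ∈ V, (c + v)⁻¹ = ∑ y : Fin m → ZMod 2, (φ y)⁻¹ := by
    rw [hVdef, Finset.sum_image (fun x _ y _ h => hψinj h)]
    exact Finset.sum_congr rfl (fun y _ => by rw [hφy y])
  rw [← hrw]
  have hpow : (2:ℕ) ^ m < 2 ^ (m + 2) ∧ 2 ^ m + 2 ^ m < 2 ^ (m + 2) ∧ 1 ≤ (2:ℕ)^m := by
    refine ⟨Nat.pow_lt_pow_right (by norm_num) (by omega), ?_, Nat.one_le_two_pow⟩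
    have : (2:ℕ) ^ (m+2) = 4 * 2 ^ m := by ring
    have h1 : 1 ≤ (2:ℕ)^m := Nat.one_le_two_pow
    omega
  by_cases hcV : c ∈ V
  · -- subspace case: the affine space is V itself
    have hshift : ∑ v ∈ V, (c + v)⁻¹ = ∑ v ∈ V, v⁻¹ := by
      refine Finset.sum_nbij' (fun v => c + v) (fun v => c + v) ?_ ?_ ?_ ?_ ?_
      · exact fun v hv => haddV c hcV v hv
      · exact fun v hv => haddV c hcV v hv
      · intro v hv; show c + (c + v) = v; rw [← add_assoc, h2, zero_add]
      · intro v hv; show c + (c + v) = v; rw [← add_assoc, h2, zero_add]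
      · intro v hv; rfl
    rw [hshift]
    -- pick coset representatives c1 c2
    have hc1ex : (Vᶜ : Finset K).Nonempty := by
      rw [← Finset.card_pos, Finset.card_compl, hcardV, hcardK]
      omega
    obtain ⟨c1, hc1⟩ := hc1ex
    rw [Finset.mem_compl] at hc1
    have hc2ex : ((V ∪ V.image (c1 + ·))ᶜ : Finset K).Nonempty := by
      rw [← Finset.card_pos, Finset.card_compl, hcardK]
      have hle : (V ∪ V.image (c1 + ·)).card ≤ 2 ^ m + 2 ^ m := by
        refine le_trans (Finset.card_union_le _ _) ?_
        rw [hcardV]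
        exact add_le_add le_rfl (le_trans (Finset.card_image_le) (le_of_eq hcardV))
      omega
    obtain ⟨c2, hc2⟩ := hc2ex
    rw [Finset.mem_compl, Finset.mem_union] at hc2
    push_neg at hc2
    obtain ⟨hc2V, hc2C⟩ := hc2
    have hc12 : c1 + c2 ∉ V := by
      intro h
      apply hc2C
      rw [Finset.mem_image]
      exact ⟨c1 + c2, h, by show c1 + (c1 + c2) = c2; rw [← add_assoc, h2, zero_add]⟩
    -- the four cosets
    obtain ⟨C1, hC1⟩ : ∃ C : Finset K, C = V.image (c1 + ·) := ⟨_, rfl⟩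
    obtain ⟨C2, hC2⟩ : ∃ C : Finset K, C = V.image (c2 + ·) := ⟨_, rfl⟩
    obtain ⟨C3, hC3⟩ : ∃ C : Finset K, C = V.image (c1 + c2 + ·) := ⟨_, rfl⟩
    have hdisj : ∀ (a b : K), a + b ∉ V →
        Disjoint (V.image (a + ·)) (V.image (b + ·)) := by
      intro a b hab
      rw [Finset.disjoint_left]
      intro x hxa hxb
      rw [Finset.mem_image] at hxa hxb
      obtain ⟨v, hv, rfl⟩ := hxa
      obtain ⟨w, hw, hweq⟩ := hxb
      apply hab
      have : a + b = v + w := by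
        have h0 : (a + v) + (b + w) = (b + w) + (b + w) := by rw [hweq]
        rw [h2] at h0
        have := eq_of_add_eq_zero' h2 (a := a + b) (b := v + w) (by linear_combination h0)
        exact this
      rw [this]
      exact haddV v hv w hw
    have hdisjV : ∀ (a : K), a ∉ V → Disjoint V (V.image (a + ·)) := by
      intro a ha
      rw [Finset.disjoint_left]
      intro x hx hxa
      rw [Finset.mem_image] at hxa
      obtain ⟨v, hv, rfl⟩ := hxa
      apply ha
      have : a = (a + v) + v := by rw [add_assoc, h2, add_zero]
      rw [this]
      exact haddV _ hx v hv
    have hd01 : Disjoint V C1 := hC1 ▸ hdisjV c1 hc1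
    have hd02 : Disjoint V C2 := hC2 ▸ hdisjV c2 hc2V
    have hd03 : Disjoint V C3 := hC3 ▸ hdisjV _ hc12
    have hd12 : Disjoint C1 C2 := hC1 ▸ hC2 ▸ hdisj c1 c2 hc12
    have hd13 : Disjoint C1 C3 := by
      refine hC1 ▸ hC3 ▸ hdisj c1 (c1 + c2) ?_
      rw [show c1 + (c1 + c2) = c2 by rw [← add_assoc, h2, zero_add]]
      exact hc2V
    have hd23 : Disjoint C2 C3 := by
      refine hC2 ▸ hC3 ▸ hdisj c2 (c1 + c2) ?_
      rw [show c2 + (c1 + c2) = c1 + (c2 + c2) by ring, h2, add_zero]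
      exact hc1
    have hcardC1 : C1.card = 2 ^ m := by
      rw [hC1, Finset.card_image_of_injective _ (add_right_injective c1), hcardV]
    have hcardC2 : C2.card = 2 ^ m := by
      rw [hC2, Finset.card_image_of_injective _ (add_right_injective c2), hcardV]
    have hcardC3 : C3.card = 2 ^ m := by
      rw [hC3, Finset.card_image_of_injective _ (add_right_injective _), hcardV]
    -- the union is everything
    obtain ⟨U, hU⟩ : ∃ U : Finset K, U = V ∪ C1 ∪ C2 ∪ C3 := ⟨_, rfl⟩
    have hdU1 : Disjoint (V ∪ C1) C2 := Finset.disjoint_union_left.mpr ⟨hd02, hd12⟩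
    have hdU2 : Disjoint (V ∪ C1 ∪ C2) C3 :=
      Finset.disjoint_union_left.mpr ⟨Finset.disjoint_union_left.mpr ⟨hd03, hd13⟩, hd23⟩
    have hcardU : U.card = Fintype.card K := by
      rw [hU, Finset.card_union_of_disjoint hdU2, Finset.card_union_of_disjoint hdU1,
        Finset.card_union_of_disjoint hd01, hcardV, hcardC1, hcardC2, hcardC3, hcardK]
      ring
    have hUuniv : U = Finset.univ := Finset.eq_univ_of_card U hcardU
    -- sum of inverses over everything is zero
    have htot : ∑ x ∈ U, x⁻¹ = 0 := by
      rw [hUuniv]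
      apply sum_inv_univ_eq_zero
      rw [hcardK]
      have := hpow.1
      have := hpow.2.2
      omega
    rw [hU, Finset.sum_union hdU2, Finset.sum_union hdU1, Finset.sum_union hd01] at htot
    -- rewrite coset sums
    have hcs : ∀ (a : K), ∑ x ∈ V.image (a + ·), x⁻¹ = ∑ v ∈ V, (a + v)⁻¹ := by
      intro a
      rw [Finset.sum_image (fun x _ y _ h => add_right_injective a h)]
    rw [hC1, hC2, hC3, hcs, hcs, hcs] at htot
    rw [coset_sum V h0V haddV h2 hc1, coset_sum V h0V haddV h2 hc2V,
      coset_sum V h0V haddV h2 hc12] at htot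
    obtain ⟨π, hπ⟩ : ∃ π : K, π = ∏ w ∈ V.erase 0, w := ⟨_, rfl⟩
    obtain ⟨α, hα⟩ : ∃ α : K, α = ∏ w ∈ V, (c1 + w) := ⟨_, rfl⟩
    obtain ⟨β, hβ⟩ : ∃ β : K, β = ∏ w ∈ V, (c2 + w) := ⟨_, rfl⟩
    have hγ : ∏ w ∈ V, (c1 + c2 + w) = α + β := by
      rw [hα, hβ]; exact L_additive V h0V haddV h2 c1 c2
    rw [← hπ, ← hα, ← hβ, hγ] at htot
    have hπ0 : π ≠ 0 := hπ ▸ pi_ne_zero V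
    have hα0 : α ≠ 0 := hα ▸ L_ne_zero V h2 hc1
    have hβ0 : β ≠ 0 := hβ ▸ L_ne_zero V h2 hc2V
    have hαβ0 : α + β ≠ 0 := hγ ▸ L_ne_zero V h2 hc12
    -- suppose the sum were zero
    intro hS0
    rw [hS0, zero_add] at htot
    -- derive α² + αβ + β² = 0
    have hkey : α^2 + α*β + β^2 = 0 := by
      have h5 : π * (α⁻¹ + β⁻¹ + (α + β)⁻¹) = 0 := by
        rw [mul_add, mul_add]; linear_combination htot
      have h6 : α⁻¹ + β⁻¹ + (α + β)⁻¹ = 0 := (mul_eq_zero.mp h5).resolve_left hπ0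
      have h7 : (α⁻¹ + β⁻¹ + (α + β)⁻¹) * (α * β * (α + β)) = α^2 + 3*(α*β) + β^2 := by
        field_simp
        ring
      rw [h6, zero_mul] at h7
      linear_combination -h7 - h2 (α*β)
    exact omega_contra h2 h3 hβ0 hαβ0 hkey
  · exact coset_sum_ne_zero V h0V haddV h2 hcV

end AuxStmt16

/-- Let `n` be odd and let `I(x) = x⁻¹` (with `0⁻¹ = 0`) be the inverse function on
`F_{2^n}`. Then for every affine subspace of `F_{2^n}` of codimension 2 (given via an
injective affine parametrization `φ : F_2^{n-2} → F_{2^n}`), `deg(I|_A) = n - 2`. -/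
theorem stmt16 (n : ℕ) (hodd : Odd n) (hn : 2 ≤ n)
    (φ : (Fin (n - 2) → ZMod 2) → GaloisField 2 n)
    (hφ : IsAffineF2 φ) (hinj : Function.Injective φ) :
    adeg ((fun x : GaloisField 2 n => x⁻¹) ∘ φ) = ((n - 2 : ℕ) : WithBot ℕ) := by
  have hn0 : n ≠ 0 := by omega
  letI : Fintype (GaloisField 2 n) := Fintype.ofFinite _
  have h2 : ∀ a : GaloisField 2 n, a + a = 0 := by
    intro a
    have hc : (2 : GaloisField 2 n) = 0 := by
      have := CharP.cast_eq_zero (GaloisField 2 n) 2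
      exact_mod_cast this
    linear_combination hc * a
  have hcardK : Fintype.card (GaloisField 2 n) = 2 ^ ((n - 2) + 2) := by
    rw [← Nat.card_eq_fintype_card, GaloisField.card 2 n hn0]
    congr 1
    omega
  have h3 : ¬ (3 ∣ Fintype.card (GaloisField 2 n) - 1) := by
    rw [hcardK, show (n - 2) + 2 = n by omega]
    exact odd_no_three hodd
  have hS : ∑ y : Fin (n - 2) → ZMod 2, (φ y)⁻¹ ≠ 0 := main_aux h2 hcardK h3 φ hφ hinj
  have htop : cubeSum ((fun x : GaloisField 2 n => x⁻¹) ∘ φ) (n - 2) 0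
      (fun i => Pi.single i 1) ≠ 0 := by
    rw [cube_top]
    exact hS
  have hub : ∀ k (a : Fin (n - 2) → ZMod 2) (v : Fin k → (Fin (n - 2) → ZMod 2)),
      cubeSum ((fun x : GaloisField 2 n => x⁻¹) ∘ φ) k a v ≠ 0 → k ≤ n - 2 := by
    intro k a v h
    by_contra hk
    push_neg at hk
    exact h (cube_zero h2 _ hk a v)
  have hsup : sSup {k : ℕ | ∃ a v,
      cubeSum ((fun x : GaloisField 2 n => x⁻¹) ∘ φ) k a v ≠ 0} = n - 2 := by
    have hmem : (n - 2) ∈ {k : ℕ | ∃ a v,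
        cubeSum ((fun x : GaloisField 2 n => x⁻¹) ∘ φ) k a v ≠ 0} :=
      ⟨0, fun i => Pi.single i 1, htop⟩
    have hbdd : ∀ k ∈ {k : ℕ | ∃ a v,
        cubeSum ((fun x : GaloisField 2 n => x⁻¹) ∘ φ) k a v ≠ 0}, k ≤ n - 2 := by
      rintro k ⟨a, v, hv⟩
      exact hub k a v hv
    exact le_antisymm (csSup_le ⟨n - 2, hmem⟩ hbdd) (le_csSup ⟨n - 2, hbdd⟩ hmem)
  have hex : ∃ k : ℕ, ∃ a v, cubeSum ((fun x : GaloisField 2 n => x⁻¹) ∘ φ) k a v ≠ 0 :=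
    ⟨n - 2, 0, fun i => Pi.single i 1, htop⟩
  unfold adeg
  rw [dif_pos hex, hsup]
end
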